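/- arXiv:2602.08471 — 9 statements merged into one kernel-verified Lean document; each statement's English description precedes it below -/
import Mathlib

section
/- For every real w > 0, every natural number k, and every real z, one has Σ_{n≥0} (−1)^{n−k} C(n,k) z^n / ((1+w)^{n(n−1)/2} n!) = (z^k / ((1+w)^{k(k−1)/2} k!)) · Set(−(1+w)^{−k} z, w), where C(n,k) is the binomial coefficient (equal to 0 for n < k). Equivalently, this is the coefficient of u^k in the expansion of Set((u−1)z, w) in powers of u. -/
/-- `Set(z,w) = Σ_{n ≥ 0} z^n / ((1+w)^{n(n-1)/2} n!)`. -/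
noncomputable def SetGF (z w : ℝ) : ℝ :=
  ∑' n : ℕ, z ^ n / ((1 + w) ^ n.choose 2 * n.factorial)

lemma add_choose_two (m k : ℕ) :
    (m + k).choose 2 = m.choose 2 + k.choose 2 + m * k := by
  induction m with
  | zero => simp
  | succ m ih =>
    have h1 : (m + k + 1).choose 2 = (m + k) + (m + k).choose 2 := by
      rw [Nat.choose_succ_succ]
      simp [Nat.choose_one_right]
    have h2 : (m + 1).choose 2 = m + m.choose 2 := by
      rw [Nat.choose_succ_succ]
      simp [Nat.choose_one_right]
    have : m + k + 1 = (m + 1) + k := by ring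
    rw [this] at h1
    have h3 : (m + 1) * k = m * k + k := by ring
    omega

lemma setGF_term (w : ℝ) (hw : 0 < w) (k m : ℕ) (z : ℝ) :
    (-1 : ℝ) ^ ((m + k) - k) * ((m + k).choose k) * z ^ (m + k)
        / ((1 + w) ^ (m + k).choose 2 * (m + k).factorial)
      = z ^ k / ((1 + w) ^ k.choose 2 * k.factorial) *
        ((-(z / (1 + w) ^ k)) ^ m / ((1 + w) ^ m.choose 2 * m.factorial)) := by
  have hA : (1 + w) ≠ 0 := by positivity
  have hfact : ((m + k).factorial : ℝ)
      = ((m + k).choose k : ℝ) * m.factorial * k.factorial := by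
    exact_mod_cast (Nat.add_choose_mul_factorial_mul_factorial m k).symm
  have hchoose : ((m + k).choose k : ℝ) ≠ 0 := by
    exact_mod_cast Nat.choose_pos (Nat.le_add_left k m) |>.ne'
  have hmf : (m.factorial : ℝ) ≠ 0 := by exact_mod_cast m.factorial_ne_zero
  have hkf : (k.factorial : ℝ) ≠ 0 := by exact_mod_cast k.factorial_ne_zero
  have hp : (-(z / (1 + w) ^ k)) ^ m = (-1) ^ m * z ^ m / ((1 + w) ^ k) ^ m := by
    rw [← neg_div, div_pow, neg_pow]
  rw [Nat.add_sub_cancel, add_choose_two, hfact, pow_add, pow_add, pow_add, pow_mul, hp]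
  field_simp
  ring

/-- For $w > 0$, $k ∈ ℕ$ and real $z$,
$\sum_{n \ge 0} (-1)^{n-k} \binom{n}{k} z^n / ((1+w)^{\binom n2} n!)
 = \frac{z^k}{(1+w)^{\binom k2} k!} \mathrm{Set}(-(1+w)^{-k} z, w)$. -/
theorem setGF_coeff_u (w : ℝ) (hw : 0 < w) (k : ℕ) (z : ℝ) :
    ∑' n : ℕ, (-1 : ℝ) ^ (n - k) * (n.choose k) * z ^ n
        / ((1 + w) ^ n.choose 2 * n.factorial)
      = z ^ k / ((1 + w) ^ k.choose 2 * k.factorial) * SetGF (-(z / (1 + w) ^ k)) w := by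
  rw [SetGF, ← tsum_mul_left]
  have hinj : Function.Injective (fun m : ℕ => m + k) := fun a b h => by
    simpa using h
  rw [← Function.Injective.tsum_eq hinj ?_]
  · exact tsum_congr fun m => setGF_term w hw k m z
  · intro n hn
    by_contra hr
    have hnk : n < k := by
      by_contra h
      exact hr ⟨n - k, by simp; omega⟩
    apply hn
    have : n.choose k = 0 := Nat.choose_eq_zero_of_lt hnk
    simp [Function.mem_support, this]
end

section
/- Let z, w > 0 be reals such that the family of Boltzmann weights of all labelled DAGs (over all vertex counts n ≥ 0) is summable. Then for every natural number k, the sum of the Boltzmann weights of all labelled DAGs having exactly k sources, divided by the sum of the Boltzmann weights of all labelled DAGs, equals (z^k / ((1+w)^{k(k−1)/2} k!)) · Set(−(1+w)^{−k} z, w). -/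
/-- A finite labelled digraph (edge set on `Fin n`) is acyclic if the transitive
closure of its edge relation is irreflexive. -/
def DAcyclic {n : ℕ} (E : Finset (Fin n × Fin n)) : Prop :=
  Irreflexive (Relation.TransGen fun a b => (a, b) ∈ E)

/-- Sources of a digraph: vertices with no incoming edge. -/
def dagSources {n : ℕ} (E : Finset (Fin n × Fin n)) : Finset (Fin n) :=
  Finset.univ.filter fun v => ∀ u, (u, v) ∉ E

/-- The type of all labelled DAGs (of all sizes `n ≥ 0`). -/
def LDAG : Type := Σ n : ℕ, {E : Finset (Fin n × Fin n) // DAcyclic E}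

/-- Boltzmann weight `z^{v(G)} w^{e(G)} / ((1+w)^{v(G)(v(G)-1)/2} v(G)!)` of a
labelled DAG. -/
noncomputable def bweight (z w : ℝ) (G : LDAG) : ℝ :=
  z ^ G.1 * w ^ (G.2 : Finset (Fin G.1 × Fin G.1)).card
    / ((1 + w) ^ G.1.choose 2 * G.1.factorial)

/-!
If every vertex of a set `T` of size `t` is a source, all edges of the DAG end in the complement
of `T`: the DAG is an arbitrary set of edges from `T` to its complement together with a DAG on the
complement, so these DAGs have weighted count `(1 + w) ^ (t * (n - t)) * A (n - t)`, where
`A m = dagPoly w m` counts the DAGs on `m` vertices by their edges. Inclusion–exclusion over `T`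
then counts the DAGs with exactly `k` sources. With the normalisation
`x ^ n / ((1 + w) ^ (n choose 2) * n!)` the resulting double sum is a Cauchy product: the series
of the DAGs with `k` sources is `z ^ k / ((1 + w) ^ (k choose 2) * k!) * Set(-(1 + w)⁻ᵏ z, w)`
times the series of all DAGs, which is the denominator.
-/

open Finset

theorem Relation.TransGen.exists_of_map {α β : Type*} {r : α → α → Prop} {f : α → β}
    (hf : Function.Injective f) {x y : β} (h : Relation.TransGen (Relation.Map r f f) x y) :
    ∃ a b, f a = x ∧ f b = y ∧ Relation.TransGen r a b := by
  induction h with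
  | single h => obtain ⟨a, b, hab, rfl, rfl⟩ := h; exact ⟨a, b, rfl, rfl, .single hab⟩
  | tail _ h ih =>
    obtain ⟨a, b, rfl, hb, hab⟩ := ih
    obtain ⟨b', c, hbc, hb', rfl⟩ := h
    exact ⟨a, c, rfl, rfl, hab.tail (hf (hb'.trans hb.symm) ▸ hbc)⟩

theorem Relation.TransGen.and_of_forall_imp {α : Type*} {r : α → α → Prop} {p : α → Prop}
    (hp : ∀ a b, r a b → p b) {a b : α} (h : Relation.TransGen r a b) (ha : p a) :
    Relation.TransGen (fun x y => r x y ∧ p x) a b := by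
  induction h using Relation.TransGen.head_induction_on with
  | single h => exact .single ⟨h, ha⟩
  | head hac _ ih => exact .head ⟨hac, ha⟩ (ih (hp _ _ hac))

theorem DAcyclic.mono {n : ℕ} {E F : Finset (Fin n × Fin n)} (hF : DAcyclic F) (h : E ⊆ F) :
    DAcyclic E :=
  fun a ha => hF a (Relation.TransGen.mono (fun _ _ hab => h hab) _ _ ha)

theorem dAcyclic_empty (n : ℕ) : DAcyclic (∅ : Finset (Fin n × Fin n)) := fun a ha => by
  obtain ⟨b, hb, -⟩ := Relation.TransGen.head'_iff.1 ha
  exact notMem_empty _ hb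

theorem dAcyclic_map_iff {m n : ℕ} (ι : Fin m ↪ Fin n) (G : Finset (Fin m × Fin m)) :
    DAcyclic (G.map (ι.prodMap ι)) ↔ DAcyclic G := by
  have hrel : (fun a b => (a, b) ∈ G.map (ι.prodMap ι))
      = Relation.Map (fun a b => (a, b) ∈ G) ι ι := by
    ext a b
    simp [Relation.Map]
  refine ⟨fun h a ha => h (ι a) ?_, fun h x hx => ?_⟩
  · exact ha.lift ι fun a b hab => mem_map_of_mem _ hab
  · rw [hrel] at hx
    obtain ⟨a, b, rfl, hba, hab⟩ := hx.exists_of_map ι.injective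
    exact h a (ι.injective hba ▸ hab)

theorem subset_dagSources_iff {n : ℕ} {T : Finset (Fin n)} {E : Finset (Fin n × Fin n)} :
    T ⊆ dagSources E ↔ E ⊆ univ ×ˢ Tᶜ := by
  simp only [subset_iff, dagSources, mem_filter, mem_univ, true_and, mem_product, mem_compl]
  exact ⟨fun h p hp hpT => h hpT p.1 hp, fun h v hv u huv => h huv hv⟩

theorem dAcyclic_iff_inter {n : ℕ} {T : Finset (Fin n)} {E : Finset (Fin n × Fin n)}
    (hE : E ⊆ univ ×ˢ Tᶜ) : DAcyclic E ↔ DAcyclic (E ∩ Tᶜ ×ˢ Tᶜ) := by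
  refine ⟨fun h => h.mono inter_subset_left, fun h a ha => ?_⟩
  have hin : ∀ a b, (a, b) ∈ E → b ∈ Tᶜ := fun a b hab => (mem_product.1 (hE hab)).2
  -- the cycle enters `a`, so `a ∉ T`, and no path starting outside `T` ever enters `T`
  obtain ⟨b, -, hba⟩ := Relation.TransGen.tail'_iff.1 ha
  refine h a (Relation.TransGen.mono (fun x y hxy => ?_) _ _
    (ha.and_of_forall_imp hin (hin b a hba)))
  exact mem_inter.2 ⟨hxy.1, mem_product.2 ⟨hxy.2, hin x y hxy.1⟩⟩

theorem sum_powerset_union_filter_inter {α R : Type*} [DecidableEq α] [CommSemiring R]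
    {X Y : Finset α} (hXY : Disjoint X Y) (P : Finset α → Prop) [DecidablePred P] (w : R) :
    ∑ E ∈ (X ∪ Y).powerset with P (E ∩ Y), w ^ #E
      = (1 + w) ^ #X * ∑ F ∈ Y.powerset with P F, w ^ #F := by
  induction X using Finset.induction_on with
  | empty =>
    rw [empty_union, card_empty, pow_zero, one_mul]
    exact sum_congr (filter_congr fun E hE => by rw [inter_eq_left.2 (mem_powerset.1 hE)])
      fun _ _ => rfl
  | insert a X haX ih =>
    obtain ⟨haY, hXY⟩ := disjoint_insert_left.1 hXY
    have ha : a ∉ X ∪ Y := by simp [haX, haY]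
    have hinsert : ∑ E ∈ (X ∪ Y).powerset with P (insert a E ∩ Y), w ^ #(insert a E)
        = w * ∑ E ∈ (X ∪ Y).powerset with P (E ∩ Y), w ^ #E := by
      rw [mul_sum]
      refine sum_congr (filter_congr fun E _ => by rw [insert_inter_of_notMem haY]) fun E hE => ?_
      rw [card_insert_of_notMem fun h => ha (mem_powerset.1 (mem_filter.1 hE).1 h), pow_succ,
        mul_comm]
    rw [insert_union, sum_filter, sum_powerset_insert ha, ← sum_filter, ← sum_filter, hinsert,
      ih hXY, card_insert_of_notMem haX]
    ring

open Classical in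
noncomputable def dagEdgeSets (n : ℕ) : Finset (Finset (Fin n × Fin n)) := univ.filter DAcyclic

theorem mem_dagEdgeSets {n : ℕ} {E : Finset (Fin n × Fin n)} :
    E ∈ dagEdgeSets n ↔ DAcyclic E := by
  classical
  simp [dagEdgeSets]

section WeightedCount

variable {R : Type*} [CommSemiring R] (w : R)

noncomputable def dagPoly (n : ℕ) : R :=
  ∑ E ∈ dagEdgeSets n, w ^ #E

noncomputable def dagSourcesPoly (n k : ℕ) : R :=
  ∑ E ∈ dagEdgeSets n with #(dagSources E) = k, w ^ #E

open Classical in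
theorem sum_dAcyclic_powerset_product {n : ℕ} (Y : Finset (Fin n)) :
    ∑ F ∈ (Y ×ˢ Y).powerset with DAcyclic F, w ^ #F = dagPoly w #Y := by
  set ι := (Y.orderEmbOfFin rfl).toEmbedding
  have hY : Y ×ˢ Y = (univ : Finset (Fin #Y × Fin #Y)).map (ι.prodMap ι) := by
    rw [← univ_product_univ, prodMap_map_product, map_orderEmbOfFin_univ]
  have hpow : (Y ×ˢ Y).powerset = univ.map (mapEmbedding (ι.prodMap ι)).toEmbedding := by
    ext F
    simp only [hY, mem_powerset, subset_map_iff, mem_map, mem_univ, true_and,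
      RelEmbedding.coe_toEmbedding, mapEmbedding_apply, subset_univ, eq_comm]
  rw [hpow, filter_map, sum_map, dagPoly, dagEdgeSets]
  refine sum_congr (filter_congr fun G _ => dAcyclic_map_iff ι G) fun G _ => ?_
  simp

theorem sum_dagEdgeSets_subset_dagSources {n : ℕ} (T : Finset (Fin n)) :
    ∑ E ∈ dagEdgeSets n with T ⊆ dagSources E, w ^ #E
      = (1 + w) ^ (#T * (n - #T)) * dagPoly w (n - #T) := by
  classical
  have hdisj : Disjoint (T ×ˢ Tᶜ) (Tᶜ ×ˢ Tᶜ) :=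
    disjoint_product.2 (.inl disjoint_compl_right)
  have hfilter : {E ∈ dagEdgeSets n | T ⊆ dagSources E}
      = {E ∈ (T ×ˢ Tᶜ ∪ Tᶜ ×ˢ Tᶜ).powerset | DAcyclic (E ∩ Tᶜ ×ˢ Tᶜ)} := by
    ext E
    rw [mem_filter, mem_filter, mem_dagEdgeSets, mem_powerset, ← union_product, union_compl,
      subset_dagSources_iff]
    exact ⟨fun ⟨h, hE⟩ => ⟨hE, (dAcyclic_iff_inter hE).1 h⟩,
      fun ⟨hE, h⟩ => ⟨(dAcyclic_iff_inter hE).2 h, hE⟩⟩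
  rw [hfilter, sum_powerset_union_filter_inter hdisj DAcyclic, sum_dAcyclic_powerset_product,
    card_product, card_compl, Fintype.card_fin]

theorem dagSourcesPoly_eq_zero_of_lt {n k : ℕ} (h : n < k) :
    dagSourcesPoly w n k = 0 := by
  refine sum_eq_zero fun E hE => absurd (mem_filter.1 hE).2 (ne_of_lt ?_)
  exact (card_le_univ _).trans_lt (by simpa using h)

end WeightedCount

theorem sum_range_add_of_eq_zero {M : Type*} [AddCommMonoid M] {f : ℕ → M} {k : ℕ}
    (hf : ∀ t < k, f t = 0) (q : ℕ) :
    ∑ t ∈ range (k + q), f t = ∑ j ∈ range q, f (k + j) := by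
  rw [sum_range_add, sum_eq_zero fun t ht => hf t (mem_range.1 ht), zero_add]

theorem sum_powerset_neg_one_pow_mul_choose {α : Type*} (X : Finset α) (k : ℕ) :
    ∑ T ∈ X.powerset, (-1 : ℤ) ^ (#T - k) * (#T).choose k = if #X = k then 1 else 0 := by
  rw [sum_powerset_apply_card fun t => (-1 : ℤ) ^ (t - k) * t.choose k]
  rcases lt_or_ge #X k with h | h
  · rw [if_neg h.ne]
    refine sum_eq_zero fun t ht => ?_
    rw [Nat.choose_eq_zero_of_lt ((Nat.lt_succ_iff.1 (mem_range.1 ht)).trans_lt h)]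
    simp
  obtain ⟨q, hq⟩ := Nat.exists_eq_add_of_le h
  have hzero : ∀ t < k, (k + q).choose t • ((-1 : ℤ) ^ (t - k) * (t.choose k : ℤ)) = 0 :=
    fun t ht => by simp [Nat.choose_eq_zero_of_lt ht]
  rw [hq, add_assoc, sum_range_add_of_eq_zero hzero]
  have hterm : ∀ j,
      (k + q).choose (k + j) • ((-1 : ℤ) ^ (k + j - k) * ((k + j).choose k : ℤ))
        = (k + q).choose k * ((-1) ^ j * q.choose j) := fun j => by
    have h : ((k + q).choose (k + j) : ℤ) * (k + j).choose k
        = (k + q).choose k * q.choose j := by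
      have h := Nat.choose_mul (n := k + q) (Nat.le_add_right k j)
      rw [Nat.add_sub_cancel_left, Nat.add_sub_cancel_left] at h
      exact_mod_cast h
    rw [nsmul_eq_mul, Nat.add_sub_cancel_left]
    linear_combination (-1) ^ j * h
  simp_rw [hterm, ← mul_sum, Int.alternating_sum_range_choose]
  rcases q with _ | q <;> simp

section InclusionExclusion

variable {R : Type*} [CommRing R] (w : R)

theorem dagSourcesPoly_eq_sum_powerset (n k : ℕ) :
    dagSourcesPoly w n k = ∑ T : Finset (Fin n), (-1) ^ (#T - k) * ((#T).choose k : R)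
      * ((1 + w) ^ (#T * (n - #T)) * dagPoly w (n - #T)) := by
  calc dagSourcesPoly w n k
      = ∑ E ∈ dagEdgeSets n, ∑ T ∈ (dagSources E).powerset,
          (-1) ^ (#T - k) * ((#T).choose k : R) * w ^ #E := by
        rw [dagSourcesPoly, sum_filter]
        refine sum_congr rfl fun E _ => ?_
        have h := congrArg (Int.cast : ℤ → R)
          (sum_powerset_neg_one_pow_mul_choose (dagSources E) k)
        push_cast at h
        rw [← sum_mul, h]
        split_ifs <;> simp
    _ = ∑ T : Finset (Fin n), ∑ E ∈ dagEdgeSets n with T ⊆ dagSources E,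
          (-1) ^ (#T - k) * ((#T).choose k : R) * w ^ #E :=
        sum_comm' fun E T => by simp [and_comm]
    _ = _ := by simp_rw [← mul_sum, sum_dagEdgeSets_subset_dagSources]

theorem dagSourcesPoly_add_eq_sum_antidiagonal (k q : ℕ) :
    dagSourcesPoly w (k + q) k = ∑ x ∈ antidiagonal q,
      (-1) ^ x.1 * ((k + q).choose (k + x.1) : R) * ((k + x.1).choose k : R)
        * ((1 + w) ^ ((k + x.1) * x.2) * dagPoly w x.2) := by
  set f : ℕ → R := fun t =>
    (-1) ^ (t - k) * (t.choose k : R) * ((1 + w) ^ (t * (k + q - t)) * dagPoly w (k + q - t))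
  have hf : ∀ t < k, (k + q).choose t • f t = 0 := fun t ht => by
    simp [f, Nat.choose_eq_zero_of_lt ht]
  rw [dagSourcesPoly_eq_sum_powerset, ← powerset_univ, sum_powerset_apply_card f, card_univ,
    Fintype.card_fin, add_assoc, sum_range_add_of_eq_zero hf,
    Nat.sum_antidiagonal_eq_sum_range_succ_mk]
  refine sum_congr rfl fun j _ => ?_
  simp only [f, nsmul_eq_mul, Nat.add_sub_cancel_left, Nat.add_sub_add_left]
  ring

end InclusionExclusion

theorem Nat.choose_two_add (a b : ℕ) : (a + b).choose 2 = a.choose 2 + a * b + b.choose 2 := by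
  induction b with
  | zero => simp
  | succ b ih =>
    rw [← add_assoc, Nat.choose_succ_succ', ih, Nat.choose_one_right, Nat.choose_succ_succ' b,
      Nat.choose_one_right]
    ring

noncomputable def graphicTerm (w x : ℝ) (n : ℕ) : ℝ :=
  x ^ n / ((1 + w) ^ n.choose 2 * n.factorial)

theorem SetGF_eq_tsum_graphicTerm (x w : ℝ) : SetGF x w = ∑' n, graphicTerm w x n := rfl

theorem graphicTerm_mul_graphicTerm {w : ℝ} (hw : 1 + w ≠ 0) (x : ℝ) (a b : ℕ) :
    graphicTerm w x a * graphicTerm w x b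
      = (a + b).choose a * (1 + w) ^ (a * b) * graphicTerm w x (a + b) := by
  have hfac : ((a + b).choose a * a.factorial * b.factorial : ℝ) = (a + b).factorial := by
    rw [Nat.choose_symm_add]
    exact_mod_cast Nat.add_choose_mul_factorial_mul_factorial a b
  have hchoose : ((a + b).choose a : ℝ) ≠ 0 :=
    Nat.cast_ne_zero.2 (Nat.choose_pos (Nat.le_add_right a b)).ne'
  simp only [graphicTerm, Nat.choose_two_add, pow_add, ← hfac]
  field_simp

theorem graphicTerm_neg_div_pow_mul {w : ℝ} (hw : 1 + w ≠ 0) (x : ℝ) (k j : ℕ) :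
    graphicTerm w (-(x / (1 + w) ^ k)) j * (1 + w) ^ (k * j) = (-1) ^ j * graphicTerm w x j := by
  have hpow : (1 + w) ^ (k * j) ≠ 0 := pow_ne_zero _ hw
  rw [graphicTerm, graphicTerm, neg_pow, div_pow, ← pow_mul, div_mul_eq_mul_div, mul_assoc,
    div_mul_cancel₀ _ hpow, mul_div_assoc]

theorem dagSourcesPoly_mul_graphicTerm {w : ℝ} (hw : 1 + w ≠ 0) (z : ℝ) (k q : ℕ) :
    dagSourcesPoly w (k + q) k * graphicTerm w z (k + q) = graphicTerm w z k *
      ∑ x ∈ antidiagonal q, graphicTerm w (-(z / (1 + w) ^ k)) x.1 *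
        (dagPoly w x.2 * graphicTerm w z x.2) := by
  rw [dagSourcesPoly_add_eq_sum_antidiagonal, sum_mul, mul_sum]
  refine sum_congr rfl fun ⟨j, p⟩ hjp => ?_
  obtain rfl : j + p = q := mem_antidiagonal.1 hjp
  have h1 := graphicTerm_mul_graphicTerm hw z (k + j) p
  have h2 := graphicTerm_mul_graphicTerm hw z k j
  have h3 := graphicTerm_neg_div_pow_mul hw z k j
  rw [← add_assoc]
  refine mul_right_cancel₀ (pow_ne_zero (k * j) hw) ?_
  linear_combination (-(-1) ^ j * ((k + j).choose k : ℝ) * dagPoly w p * (1 + w) ^ (k * j)) * h1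
    - ((-1) ^ j * dagPoly w p * graphicTerm w z p) * h2
    - (graphicTerm w z k * dagPoly w p * graphicTerm w z p) * h3

theorem summable_norm_graphicTerm {w : ℝ} (hw : 0 ≤ w) (x : ℝ) :
    Summable fun n => ‖graphicTerm w x n‖ := by
  refine .of_nonneg_of_le (fun _ => norm_nonneg _) (fun n => ?_)
    (Real.summable_pow_div_factorial ‖x‖)
  have h1w : 1 ≤ 1 + w := by linarith
  have hden : 0 < (1 + w) ^ n.choose 2 * (n.factorial : ℝ) := by positivity
  rw [graphicTerm, norm_div, norm_pow, Real.norm_of_nonneg hden.le]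
  exact div_le_div_of_nonneg_left (by positivity) (by positivity)
    (le_mul_of_one_le_left (by positivity) (one_le_pow₀ h1w))

theorem tsum_dagSourcesPoly_mul_graphicTerm {w z : ℝ} (hw : 0 ≤ w)
    (hA : Summable fun n => ‖dagPoly w n * graphicTerm w z n‖) (k : ℕ) :
    ∑' n, dagSourcesPoly w n k * graphicTerm w z n = graphicTerm w z k *
      (SetGF (-(z / (1 + w) ^ k)) w * ∑' n, dagPoly w n * graphicTerm w z n) := by
  have hsupport : (Function.support fun n => dagSourcesPoly w n k * graphicTerm w z n)
      ⊆ Set.range (k + ·) := fun n hn => by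
    by_contra hk
    have hnk : n < k := not_le.1 fun h => hk ⟨n - k, Nat.add_sub_of_le h⟩
    exact hn (by simp only [dagSourcesPoly_eq_zero_of_lt w hnk, zero_mul])
  calc ∑' n, dagSourcesPoly w n k * graphicTerm w z n
      = ∑' q, dagSourcesPoly w (k + q) k * graphicTerm w z (k + q) :=
        ((add_right_injective k).tsum_eq hsupport).symm
    _ = ∑' q, graphicTerm w z k * ∑ x ∈ antidiagonal q,
          graphicTerm w (-(z / (1 + w) ^ k)) x.1 * (dagPoly w x.2 * graphicTerm w z x.2) :=
        tsum_congr (dagSourcesPoly_mul_graphicTerm (by linarith) z k)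
    _ = _ := by
      rw [tsum_mul_left, SetGF_eq_tsum_graphicTerm,
        ← tsum_mul_tsum_eq_tsum_sum_antidiagonal_of_summable_norm
          (summable_norm_graphicTerm hw _) hA]

theorem bweight_eq_mul_graphicTerm (z w : ℝ) (G : LDAG) :
    bweight z w G = w ^ #G.2.1 * graphicTerm w z G.1 := by
  rw [bweight, graphicTerm, mul_div_assoc', mul_comm]

theorem hasSum_indicator_bweight {z w : ℝ} (hsum : Summable (bweight z w))
    (P : (n : ℕ) → Finset (Fin n × Fin n) → Prop) [∀ n, DecidablePred (P n)] :
    HasSum (fun n => (∑ E ∈ dagEdgeSets n with P n E, w ^ #E) * graphicTerm w z n)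
      (∑' G, {G : LDAG | P G.1 G.2.1}.indicator (bweight z w) G) := by
  classical
  refine (hsum.indicator _).hasSum.sigma fun n => ?_
  have hfun : (fun e : {E // DAcyclic E} =>
      {G : LDAG | P G.1 G.2.1}.indicator (bweight z w) ⟨n, e⟩)
      = (fun E => if P n E then w ^ #E * graphicTerm w z n else 0) ∘ Subtype.val := by
    ext e
    rw [Function.comp_apply, ← bweight_eq_mul_graphicTerm z w ⟨n, e⟩]
    exact if_congr Iff.rfl rfl rfl
  rw [hfun]
  refine (hasSum_subtype_iff_indicator (s := {E | DAcyclic E})).2 ?_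
  convert hasSum_fintype _ using 1
  rw [sum_mul, sum_filter, dagEdgeSets, sum_filter]
  refine sum_congr rfl fun E _ => ?_
  simp [Set.indicator]

theorem tsum_bweight_pos {z w : ℝ} (hz : 0 ≤ z) (hw : 0 ≤ w) (hsum : Summable (bweight z w)) :
    0 < ∑' G, bweight z w G := by
  refine hsum.tsum_pos (fun G => ?_) ⟨0, ∅, dAcyclic_empty 0⟩ (by simp [bweight])
  rw [bweight_eq_mul_graphicTerm, graphicTerm]
  have : 0 < 1 + w := by linarith
  positivity

/-- Under the Boltzmann model, the probability that a random labelled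
DAG has exactly $k$ sources equals
$\frac{z^k}{(1+w)^{\binom k2} k!} \mathrm{Set}(-(1+w)^{-k} z, w)$. -/
theorem boltzmann_sources_distribution (z w : ℝ) (hz : 0 < z) (hw : 0 < w)
    (hsum : Summable fun G : LDAG => bweight z w G) (k : ℕ) :
    (∑' G : {G : LDAG // (dagSources (G.2 : Finset (Fin G.1 × Fin G.1))).card = k},
        bweight z w G.1)
      / (∑' G : LDAG, bweight z w G)
      = z ^ k / ((1 + w) ^ k.choose 2 * k.factorial) * SetGF (-(z / (1 + w) ^ k)) w := by
  have hD : HasSum (fun n => dagPoly w n * graphicTerm w z n) (∑' G, bweight z w G) := by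
    simpa [dagPoly] using hasSum_indicator_bweight hsum fun _ _ => True
  have hN : HasSum (fun n => dagSourcesPoly w n k * graphicTerm w z n)
      (∑' G : {G : LDAG // #(dagSources G.2.1) = k}, bweight z w G) := by
    have h := hasSum_indicator_bweight hsum fun _ E => #(dagSources E) = k
    rw [← _root_.tsum_subtype] at h
    exact h
  rw [← hN.tsum_eq, tsum_dagSourcesPoly_mul_graphicTerm hw.le
    (summable_norm_iff.2 hD.summable), hD.tsum_eq, mul_div_assoc,
    mul_div_cancel_right₀ _ (tsum_bweight_pos hz.le hw.le hsum).ne', graphicTerm]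
end

section
/- For every real w > 0 and every natural number n, the following identity holds: Σ_{k=0}^{n} (−1)^k C(n,k) (1+w)^{k(n−k)} A_{n−k}(w) = [n = 0], i.e., the sum equals 1 if n = 0 and 0 if n ≥ 1, where A_j(w) = Σ_m D(j,m) w^m. (This is the coefficient-wise form of the identity DAG(z,w) = 1/Set(−z,w).) -/
open Classical in
/-- `Dcount n m k` = number of labelled DAGs on `n` vertices with `m` edges and
exactly `k` sources. -/
noncomputable def Dcount (n m k : ℕ) : ℕ :=
  (Finset.univ.filter fun E : Finset (Fin n × Fin n) =>
    DAcyclic E ∧ E.card = m ∧ (dagSources E).card = k).card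

open Classical in
/-- `DcountE n m` = number of labelled DAGs on `n` vertices with `m` edges. -/
noncomputable def DcountE (n m : ℕ) : ℕ :=
  (Finset.univ.filter fun E : Finset (Fin n × Fin n) =>
    DAcyclic E ∧ E.card = m).card

/-! Fix a set `S` of vertices and count, with weight `w ^ #E`, the DAGs in which every vertex
of `S` is a source. Such a DAG is an arbitrary set of edges from `S` to `Sᶜ` together with a DAG
on `Sᶜ`, so the count is `(1 + w) ^ (#S * #Sᶜ) * A_{#Sᶜ}(w)`. By inclusion–exclusion over `S`,
the alternating sum of these counts is the weighted number of DAGs without sources, and every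
DAG on a nonempty vertex set has a source. -/

open Finset Relation

namespace Finset

variable {α β : Type*}

theorem powerset_map (f : α ↪ β) (s : Finset α) :
    (s.map f).powerset = s.powerset.map (mapEmbedding f).toEmbedding := by
  ext t
  simp only [mem_powerset, subset_map_iff, mem_map, RelEmbedding.coe_toEmbedding,
    mapEmbedding_apply]
  grind

theorem sum_powerset_union_of_disjoint [DecidableEq α] {M : Type*} [AddCommMonoid M]
    {s t : Finset α} (hst : Disjoint s t) (f : Finset α → M) :
    ∑ u ∈ (s ∪ t).powerset, f u = ∑ x ∈ s.powerset, ∑ y ∈ t.powerset, f (x ∪ y) := by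
  rw [← sum_product']
  have hsplit : ∀ u ⊆ s ∪ t, u ∩ s ∪ u ∩ t = u := fun u hu => by
    rw [← inter_union_distrib_left, inter_eq_left.2 hu]
  refine sum_nbij' (fun u => (u ∩ s, u ∩ t)) (fun p => p.1 ∪ p.2) ?_ ?_ ?_ ?_ ?_ <;>
    simp only [mem_product, mem_powerset, Prod.forall, Prod.mk.injEq]
  · exact fun u _ => ⟨inter_subset_right, inter_subset_right⟩
  · exact fun x y h => union_subset_union h.1 h.2
  · exact hsplit
  · intro x y h
    rw [union_inter_distrib_right, union_inter_distrib_right, inter_eq_left.2 h.1,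
      inter_eq_left.2 h.2, disjoint_iff_inter_eq_empty.1 (hst.mono_right h.2).symm,
      disjoint_iff_inter_eq_empty.1 (hst.mono_left h.1), union_empty, empty_union]
    exact ⟨rfl, rfl⟩
  · exact fun u h => by rw [hsplit u h]

end Finset

def IsDAG {V : Type*} (E : Finset (V × V)) : Prop :=
  ∀ v, ¬ TransGen (fun a b => (a, b) ∈ E) v v

section

variable {α β V R : Type*}

theorem exists_of_transGen_mem_map {f : α ↪ β} {E : Finset (α × α)} {x y : β}
    (h : TransGen (fun a b => (a, b) ∈ E.map (f.prodMap f)) x y) :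
    ∃ a b, f a = x ∧ f b = y ∧ TransGen (fun a b => (a, b) ∈ E) a b := by
  induction h with
  | single h =>
    obtain ⟨⟨a, b⟩, hab, he⟩ := mem_map.1 h
    simp only [Function.Embedding.coe_prodMap, Prod.map, Prod.mk.injEq] at he
    exact ⟨a, b, he.1, he.2, .single hab⟩
  | tail _ h ih =>
    obtain ⟨a, b, rfl, rfl, hab⟩ := ih
    obtain ⟨⟨b', c⟩, hbc, he⟩ := mem_map.1 h
    simp only [Function.Embedding.coe_prodMap, Prod.map, Prod.mk.injEq, f.apply_eq_iff_eq] at he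
    obtain ⟨rfl, rfl⟩ := he
    exact ⟨a, c, rfl, rfl, hab.tail hbc⟩

theorem isDAG_map_iff (f : α ↪ β) (E : Finset (α × α)) :
    IsDAG (E.map (f.prodMap f)) ↔ IsDAG E := by
  refine ⟨fun h a ha => h (f a) (ha.lift f fun _ _ => mem_map_of_mem _), fun h x hx => ?_⟩
  obtain ⟨a, b, rfl, hab, h'⟩ := exists_of_transGen_mem_map hx
  exact h a (f.injective hab ▸ h')

/-- A path that starts outside `S` never enters `S`, so it uses no edge leaving `S`. -/
theorem isDAG_iff_filter_fst_notMem [DecidableEq V] {E : Finset (V × V)} {S : Finset V}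
    (hE : ∀ p ∈ E, p.2 ∉ S) : IsDAG E ↔ IsDAG {p ∈ E | p.1 ∉ S} := by
  refine ⟨fun h v hv => h v (TransGen.mono (fun _ _ h => (mem_filter.1 h).1) _ _ hv),
    fun h v hv => h v ?_⟩
  have avoid : ∀ {u b}, u ∉ S → TransGen (fun a b => (a, b) ∈ E) u b →
      TransGen (fun a b => (a, b) ∈ {p ∈ E | p.1 ∉ S}) u b := by
    intro u b hu hub
    induction hub using TransGen.head_induction_on with
    | single h => exact .single (mem_filter.2 ⟨h, hu⟩)
    | head h _ ih => exact .head (mem_filter.2 ⟨h, hu⟩) (ih (hE _ h))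
  refine avoid ?_ hv
  cases hv with
  | single h => exact hE _ h
  | tail _ h => exact hE _ h

open scoped Classical in
noncomputable def dagWeight (V : Type*) [Fintype V] [CommSemiring R] (w : R) : R :=
  ∑ E : Finset (V × V) with IsDAG E, w ^ #E

open scoped Classical

theorem sum_isDAG_powerset_map_univ [Fintype α] [DecidableEq β] [CommSemiring R] (f : α ↪ β)
    (w : R) :
    ∑ E ∈ (univ.map f ×ˢ univ.map f).powerset with IsDAG E, w ^ #E = dagWeight α w := by
  rw [← prodMap_map_product, powerset_map, filter_map, sum_map, univ_product_univ,
    powerset_univ, dagWeight]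
  simp [Function.comp_def, isDAG_map_iff]

theorem sum_isDAG_powerset_product_self [DecidableEq V] [CommSemiring R] (T : Finset V)
    (w : R) : ∑ E ∈ (T ×ˢ T).powerset with IsDAG E, w ^ #E = dagWeight (Fin #T) w := by
  have hT : univ.map (T.equivFin.symm.toEmbedding.trans (.subtype (· ∈ T))) = T := by
    rw [← Finset.map_map, map_univ_equiv, univ_eq_attach, attach_map_val]
  conv_lhs => rw [← hT]
  exact sum_isDAG_powerset_map_univ _ w

variable [DecidableEq V] [Fintype V]

theorem isDAG_union_iff_right {S : Finset V} {x y : Finset (V × V)}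
    (hx : x ⊆ S ×ˢ Sᶜ) (hy : y ⊆ Sᶜ ×ˢ Sᶜ) : IsDAG (x ∪ y) ↔ IsDAG y := by
  have hsnd : ∀ p ∈ x ∪ y, p.2 ∉ S := by
    intro p hp
    rcases mem_union.1 hp with h | h
    · exact mem_compl.1 (mem_product.1 (hx h)).2
    · exact mem_compl.1 (mem_product.1 (hy h)).2
  have hfilter : {p ∈ x ∪ y | p.1 ∉ S} = y := by
    ext p
    refine ⟨fun hp => ?_, fun hp => mem_filter.2 ⟨mem_union_right _ hp, ?_⟩⟩
    · obtain ⟨hxy, hp1⟩ := mem_filter.1 hp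
      rcases mem_union.1 hxy with hp | hp
      · exact absurd (mem_product.1 (hx hp)).1 hp1
      · exact hp
    · exact mem_compl.1 (mem_product.1 (hy hp)).1
  rw [isDAG_iff_filter_fst_notMem hsnd, hfilter]

def sources (E : Finset (V × V)) : Finset V := {v | ∀ u, (u, v) ∉ E}

theorem subset_sources_iff {E : Finset (V × V)} {S : Finset V} :
    S ⊆ sources E ↔ E ⊆ univ ×ˢ Sᶜ := by
  simp only [subset_iff, sources, mem_filter, mem_univ, true_and, mem_product, mem_compl,
    Prod.forall]
  exact ⟨fun h u v huv hv => h hv u huv, fun h v hv u huv => h u v huv hv⟩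

theorem IsDAG.sources_nonempty [Nonempty V] {E : Finset (V × V)} (hE : IsDAG E) :
    (sources E).Nonempty := by
  have : Std.Irrefl (TransGen fun a b => (a, b) ∈ E) := ⟨hE⟩
  obtain ⟨v, -, hv⟩ := (Finite.wellFounded_of_trans_of_irrefl
    (TransGen fun a b => (a, b) ∈ E)).has_min Set.univ Set.univ_nonempty
  exact ⟨v, mem_filter.2 ⟨mem_univ v, fun u hu => hv u trivial (.single hu)⟩⟩

theorem sum_isDAG_subset_sources [CommSemiring R] (S : Finset V) (w : R) :
    ∑ E with IsDAG E ∧ S ⊆ sources E, w ^ #E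
      = (1 + w) ^ (#S * #Sᶜ) * dagWeight (Fin #Sᶜ) w := by
  have hunion : univ ×ˢ Sᶜ = S ×ˢ Sᶜ ∪ Sᶜ ×ˢ Sᶜ := by rw [← union_product, union_compl]
  have hdisj : Disjoint (S ×ˢ Sᶜ) (Sᶜ ×ˢ Sᶜ) := disjoint_product.2 (.inl disjoint_compl_right)
  have hpow : ∑ x ∈ (S ×ˢ Sᶜ).powerset, w ^ #x = (1 + w) ^ #(S ×ˢ Sᶜ) := by
    simpa [add_comm] using sum_pow_mul_eq_add_pow w 1 (S ×ˢ Sᶜ)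
  calc ∑ E with IsDAG E ∧ S ⊆ sources E, w ^ #E
      = ∑ E ∈ (univ ×ˢ Sᶜ).powerset with IsDAG E, w ^ #E := by
        refine sum_congr ?_ fun _ _ => rfl
        ext E
        simp [subset_sources_iff, and_comm]
    _ = ∑ x ∈ (S ×ˢ Sᶜ).powerset, ∑ y ∈ (Sᶜ ×ˢ Sᶜ).powerset,
          if IsDAG (x ∪ y) then w ^ #(x ∪ y) else 0 := by
        rw [sum_filter, hunion, sum_powerset_union_of_disjoint hdisj]
    _ = ∑ x ∈ (S ×ˢ Sᶜ).powerset, w ^ #x * ∑ y ∈ (Sᶜ ×ˢ Sᶜ).powerset with IsDAG y, w ^ #y := by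
        refine sum_congr rfl fun x hx => ?_
        rw [mul_sum, sum_filter]
        refine sum_congr rfl fun y hy => ?_
        rw [mem_powerset] at hx hy
        rw [isDAG_union_iff_right hx hy, card_union_of_disjoint (hdisj.mono hx hy), pow_add]
    _ = (1 + w) ^ (#S * #Sᶜ) * dagWeight (Fin #Sᶜ) w := by
        rw [← sum_mul, hpow, card_product, sum_isDAG_powerset_product_self]

theorem sum_neg_one_pow_mul_sum_isDAG_subset_sources [CommRing R] (w : R) :
    ∑ S : Finset V, (-1) ^ #S * ∑ E with IsDAG E ∧ S ⊆ sources E, w ^ #E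
      = ∑ E : Finset (V × V) with IsDAG E ∧ sources E = ∅, w ^ #E := by
  calc ∑ S : Finset V, (-1) ^ #S * ∑ E with IsDAG E ∧ S ⊆ sources E, w ^ #E
      = ∑ E with IsDAG E, (∑ S ∈ (sources E).powerset, (-1 : R) ^ #S) * w ^ #E := by
        simp_rw [← filter_filter, sum_filter (p := fun E => _ ⊆ sources E), mul_sum, sum_mul]
        rw [sum_comm]
        refine sum_congr rfl fun E _ => ?_
        rw [← filter_subset_univ, sum_filter]
        simp only [mul_ite, mul_zero]
    _ = ∑ E : Finset (V × V) with IsDAG E ∧ sources E = ∅, w ^ #E := by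
        rw [← filter_filter (p := IsDAG), sum_filter (p := fun E => sources E = ∅)]
        refine sum_congr rfl fun E _ => ?_
        have : ∑ S ∈ (sources E).powerset, (-1 : R) ^ #S = if sources E = ∅ then 1 else 0 := by
          simpa using congrArg (Int.cast : ℤ → R) (sum_powerset_neg_one_pow_card (x := sources E))
        rw [this, ite_mul, one_mul, zero_mul]

theorem sum_isDAG_sources_eq_empty [CommSemiring R] (w : R) :
    ∑ E : Finset (V × V) with IsDAG E ∧ sources E = ∅, w ^ #E
      = if Fintype.card V = 0 then 1 else 0 := by
  split_ifs with hV
  · rw [Fintype.card_eq_zero_iff] at hV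
    rw [sum_filter, Fintype.sum_unique, if_pos]
    · rw [Subsingleton.elim default ∅, card_empty, pow_zero]
    · exact ⟨fun v => isEmptyElim v, Subsingleton.elim _ _⟩
  · have : Nonempty V := Fintype.card_pos_iff.1 (Nat.pos_of_ne_zero hV)
    refine sum_eq_zero fun E hE => ?_
    obtain ⟨hdag, hempty⟩ := (mem_filter.1 hE).2
    exact absurd hempty hdag.sources_nonempty.ne_empty

theorem sum_range_neg_one_pow_choose_mul_dagWeight [CommRing R] (w : R) :
    ∑ k ∈ range (Fintype.card V + 1), (-1) ^ k * (Fintype.card V).choose k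
        * (1 + w) ^ (k * (Fintype.card V - k)) * dagWeight (Fin (Fintype.card V - k)) w
      = if Fintype.card V = 0 then 1 else 0 := by
  have hS : ∀ S : Finset V, ∑ E with IsDAG E ∧ S ⊆ sources E, w ^ #E
      = (1 + w) ^ (#S * (Fintype.card V - #S)) * dagWeight (Fin (Fintype.card V - #S)) w :=
    fun S => by rw [sum_isDAG_subset_sources, card_compl]
  rw [← sum_isDAG_sources_eq_empty w, ← sum_neg_one_pow_mul_sum_isDAG_subset_sources w]
  simp_rw [hS]
  rw [← powerset_univ, sum_powerset_apply_card fun k => (-1 : R) ^ k *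
    ((1 + w) ^ (k * (Fintype.card V - k)) * dagWeight (Fin (Fintype.card V - k)) w), card_univ]
  refine sum_congr rfl fun k _ => ?_
  rw [nsmul_eq_mul]
  ring

theorem tsum_dcountE_mul_pow [CommSemiring R] [TopologicalSpace R] (j : ℕ) (w : R) :
    ∑' m, (DcountE j m : R) * w ^ m = dagWeight (Fin j) w := by
  have hcard : ∀ E : Finset (Fin j × Fin j), #E ∈ range (j * j + 1) := fun E => by
    simpa [Nat.lt_succ_iff] using card_le_univ E
  rw [tsum_eq_sum (s := range (j * j + 1)), dagWeight,
    ← sum_fiberwise_of_maps_to fun E _ => hcard E]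
  · refine sum_congr rfl fun m _ => ?_
    rw [filter_filter, sum_congr rfl fun E hE => by rw [(mem_filter.1 hE).2.2], sum_const,
      nsmul_eq_mul, DcountE]
    -- `DAcyclic` is `IsDAG` on `Fin j`
    rfl
  · intro m hm
    rw [DcountE, card_eq_zero.2, Nat.cast_zero, zero_mul]
    exact filter_eq_empty_iff.2 fun E _ h => hm (h.2 ▸ hcard E)

end

theorem dag_inverse_identity_general (w : ℝ) (n : ℕ) :
    ∑ k ∈ Finset.range (n + 1),
        (-1 : ℝ) ^ k * (n.choose k) * (1 + w) ^ (k * (n - k))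
          * ∑' m : ℕ, (DcountE (n - k) m : ℝ) * w ^ m
      = if n = 0 then 1 else 0 := by
  simp_rw [tsum_dcountE_mul_pow]
  have h := sum_range_neg_one_pow_choose_mul_dagWeight (V := Fin n) w
  rw [Fintype.card_fin] at h
  exact h

/-- Coefficient-wise form of $\mathrm{DAG}(z,w) = 1/\mathrm{Set}(-z,w)$:
$\sum_{k=0}^n (-1)^k \binom nk (1+w)^{k(n-k)} A_{n-k}(w) = [n = 0]$,
where $A_j(w) = \sum_m D(j,m) w^m$. -/
theorem dag_inverse_identity (w : ℝ) (hw : 0 < w) (n : ℕ) :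
    ∑ k ∈ Finset.range (n + 1),
        (-1 : ℝ) ^ k * (n.choose k) * (1 + w) ^ (k * (n - k))
          * ∑' m : ℕ, (DcountE (n - k) m : ℝ) * w ^ m
      = if n = 0 then 1 else 0 :=
  dag_inverse_identity_general w n
end

section
/- For every natural number n, the following identity of polynomials in the two variables w and u holds: Σ_{k=0}^{n} (−1)^k C(n,k) (1+w)^{k(n−k)} Q_{n−k}(w,u) = (u − 1)^n, where Q_j(w,u) = Σ_{m,s} D(j,m,s) w^m u^s. (This is the coefficient-wise form of the identity DAG(z,w,u) = Set((u−1)z,w)/Set(−z,w).) -/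
/-!
Write `Q_n(w, u)` for the edge/source polynomial of DAGs on `n` labelled vertices. Expanding
`u ^ #sources = ∑_{S ⊆ sources} (u - 1) ^ #S` and observing that a DAG in which every vertex of `S`
is a source is the same as an arbitrary set of edges from `S` to its complement together with a
DAG on the complement, one gets
`Q_n(w, u) = ∑_k C(n, k) (u - 1) ^ k (1 + w) ^ (k (n - k)) Q_{n-k}(w, 1)`,
that is, `Q(u) = X(u - 1) ⋆ Q(1)` for the convolution `⋆` of graphic generating functions and
`X(x)_n = x ^ n`. At `u = 0` only the empty DAG survives, since every nonempty DAG has a source,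
so `X(-1) ⋆ Q(1) = δ₀`. As `⋆` is left-commutative,
`X(-1) ⋆ Q(u) = X(u - 1) ⋆ (X(-1) ⋆ Q(1)) = X(u - 1)`.
-/

open Finset Relation

theorem Nat.choose_mul_choose_comm (a b c : ℕ) :
    (a + b + c).choose a * (b + c).choose b = (a + b + c).choose b * (a + c).choose a := by
  have h := Nat.choose_mul (n := a + b + c) (Nat.le_add_right b c)
  rw [Nat.add_sub_cancel_left, show a + b + c - b = a + c by omega] at h
  rw [Nat.choose_symm_of_eq_add (show a + b + c = a + (b + c) by omega), h,
    Nat.choose_symm_add]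

section GraphicConv

variable {R : Type*} [CommSemiring R]

/-- The coefficients of the product of the graphic generating functions
`∑ f n zⁿ / (n! q^(n choose 2))` and `∑ g n zⁿ / (n! q^(n choose 2))`. -/
def graphicConv (q : R) (f g : ℕ → R) (n : ℕ) : R :=
  ∑ p ∈ antidiagonal n, n.choose p.1 * q ^ (p.1 * p.2) * f p.1 * g p.2

theorem graphicConv_left_comm (q : R) (f g h : ℕ → R) :
    graphicConv q f (graphicConv q g h) = graphicConv q g (graphicConv q f h) := by
  funext n
  simp only [graphicConv, mul_sum, sum_sigma']
  have swap_mem : ∀ x ∈ (antidiagonal n).sigma fun p => antidiagonal p.2,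
      (⟨(x.2.1, x.1.1 + x.2.2), (x.1.1, x.2.2)⟩ : (_ : ℕ × ℕ) × ℕ × ℕ) ∈
        (antidiagonal n).sigma fun p => antidiagonal p.2 := by
    rintro ⟨⟨a, m⟩, ⟨b, c⟩⟩ hx
    simp only [mem_sigma, HasAntidiagonal.mem_antidiagonal, and_true] at hx ⊢
    omega
  refine sum_nbij' _ _ swap_mem swap_mem ?_ ?_ ?_
  all_goals
    rintro ⟨⟨a, m⟩, ⟨b, c⟩⟩ hx
    simp only [mem_sigma, HasAntidiagonal.mem_antidiagonal] at hx
    obtain ⟨rfl, rfl⟩ := hx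
  · rfl
  · rfl
  have hchoose := congrArg (Nat.cast (R := R)) (Nat.choose_mul_choose_comm a b c)
  push_cast [add_assoc, add_left_comm b a c] at hchoose
  calc _ = ((a + (b + c)).choose a * (b + c).choose b : R) * q ^ (a * (b + c) + b * c)
        * (f a * g b * h c) := by ring
    _ = ((a + (b + c)).choose b * (a + c).choose a : R) * q ^ (b * (a + c) + a * c)
        * (f a * g b * h c) := by
      rw [hchoose, show a * (b + c) + b * c = b * (a + c) + a * c by ring]
    _ = _ := by ring

theorem graphicConv_eq_sum_range (q : R) (f g : ℕ → R) (n : ℕ) :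
    graphicConv q f g n
      = ∑ k ∈ range (n + 1), n.choose k * q ^ (k * (n - k)) * f k * g (n - k) :=
  Nat.sum_antidiagonal_eq_sum_range_succ (fun i j => n.choose i * q ^ (i * j) * f i * g j) n

theorem graphicConv_single_zero_one (q : R) (f : ℕ → R) :
    graphicConv q f (Pi.single 0 1) = f := by
  funext n
  rw [graphicConv, sum_eq_single (n, 0)]
  · simp
  · rintro ⟨a, b⟩ hab hne
    obtain rfl | hb := eq_or_ne b 0
    · simp_all
    · simp [hb]
  · simp

end GraphicConv

theorem irreflexive_transGen_iff_exists_rank {α : Type*} [Fintype α] {r : α → α → Prop} :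
    (∀ a, ¬ TransGen r a a) ↔ ∃ f : α → ℕ, ∀ a b, r a b → f a < f b := by
  classical
  constructor
  · intro hirr
    refine ⟨fun b => #{a | TransGen r a b}, fun a b hab => card_lt_card ?_⟩
    refine (ssubset_iff_of_subset fun x hx => ?_).2 ⟨a, ?_, ?_⟩
    · simp only [mem_filter, mem_univ, true_and] at hx ⊢
      exact hx.tail hab
    · simpa using TransGen.single hab
    · simpa using hirr a
  · rintro ⟨f, hf⟩ a ha
    have rank_lt {a b} (h : TransGen r a b) : f a < f b := by
      induction h with
      | single h => exact hf _ _ h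
      | tail _ h ih => exact ih.trans (hf _ _ h)
    exact lt_irrefl _ (rank_lt ha)

namespace LabelledDAG

open scoped Classical

variable {α β : Type*} [Fintype α] [Fintype β]

def IsAcyclic (E : Finset (α × α)) : Prop :=
  ∀ a, ¬ TransGen (fun a b => (a, b) ∈ E) a a

noncomputable def sources (E : Finset (α × α)) : Finset α :=
  {v | ∀ u, (u, v) ∉ E}

theorem isAcyclic_iff_exists_rank {E : Finset (α × α)} :
    IsAcyclic E ↔ ∃ f : α → ℕ, ∀ e ∈ E, f e.1 < f e.2 := by
  simp [IsAcyclic, irreflexive_transGen_iff_exists_rank]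

theorem subset_sources_iff {E : Finset (α × α)} {S : Finset α} :
    S ⊆ sources E ↔ ∀ e ∈ E, e.2 ∉ S := by
  simp only [sources, subset_iff, mem_filter, mem_univ, true_and]
  exact ⟨fun h e he hS => h hS e.1 he, fun h v hv u huv => h _ huv hv⟩

theorem IsAcyclic.sources_nonempty [Nonempty α] {E : Finset (α × α)} (hE : IsAcyclic E) :
    (sources E).Nonempty := by
  obtain ⟨f, hf⟩ := isAcyclic_iff_exists_rank.1 hE
  obtain ⟨v, -, hv⟩ := exists_min_image univ f univ_nonempty
  exact ⟨v, by simpa [sources] using fun u huv => (hf _ huv).not_ge (hv u (mem_univ u))⟩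

theorem isAcyclic_map_equiv (e : α ≃ β) {E : Finset (α × α)} :
    IsAcyclic (E.map (e.prodCongr e).toEmbedding) ↔ IsAcyclic E := by
  simp only [isAcyclic_iff_exists_rank, forall_mem_map]
  constructor
  · rintro ⟨f, hf⟩
    exact ⟨f ∘ e, hf⟩
  · rintro ⟨f, hf⟩
    exact ⟨f ∘ e.symm, by simpa using hf⟩

theorem sources_map_equiv (e : α ≃ β) (E : Finset (α × α)) :
    sources (E.map (e.prodCongr e).toEmbedding) = (sources E).map e.toEmbedding := by
  ext v
  obtain ⟨a, rfl⟩ := e.surjective v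
  simp [sources, e.forall_congr_left]

theorem IsAcyclic.comap {E : Finset (α × α)} (hE : IsAcyclic E) (g : β → α) :
    IsAcyclic ({p | Prod.map g g p ∈ E} : Finset (β × β)) := by
  obtain ⟨f, hf⟩ := isAcyclic_iff_exists_rank.1 hE
  exact isAcyclic_iff_exists_rank.2 ⟨f ∘ g, fun p hp => hf _ (mem_filter.1 hp).2⟩

section Split

variable (S : Finset α)

def complEdgeEmbedding : ↥Sᶜ × ↥Sᶜ ↪ α × α :=
  (Function.Embedding.subtype _).prodMap (Function.Embedding.subtype _)

variable {S}

theorem IsAcyclic.union_map_complEdgeEmbedding {F : Finset (α × α)} {B : Finset (↥Sᶜ × ↥Sᶜ)}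
    (hF : F ⊆ S ×ˢ Sᶜ) (hB : IsAcyclic B) :
    IsAcyclic (F ∪ B.map (complEdgeEmbedding S)) := by
  obtain ⟨f, hf⟩ := isAcyclic_iff_exists_rank.1 hB
  refine isAcyclic_iff_exists_rank.2
    ⟨fun v => if hv : v ∈ Sᶜ then f ⟨v, hv⟩ + 1 else 0, fun e he => ?_⟩
  rcases mem_union.1 he with he | he
  · obtain ⟨h1, h2⟩ := mem_product.1 (hF he)
    simp [h1, h2]
  · obtain ⟨p, hp, rfl⟩ := mem_map.1 he
    simpa [complEdgeEmbedding] using hf p hp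

variable {F E : Finset (α × α)}

theorem disjoint_map_complEdgeEmbedding (hF : F ⊆ S ×ˢ Sᶜ) (B : Finset (↥Sᶜ × ↥Sᶜ)) :
    Disjoint F (B.map (complEdgeEmbedding S)) := by
  refine disjoint_left.2 fun e he he' => ?_
  obtain ⟨p, -, rfl⟩ := mem_map.1 he'
  exact mem_compl.1 p.1.2 (mem_product.1 (hF he)).1

theorem filter_union_map_complEdgeEmbedding (hF : F ⊆ S ×ˢ Sᶜ) (B : Finset (↥Sᶜ × ↥Sᶜ)) :
    (F ∪ B.map (complEdgeEmbedding S)).filter (·.1 ∈ S) = F := by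
  ext e
  simp only [mem_filter, mem_union, mem_map]
  constructor
  · rintro ⟨he | ⟨p, -, rfl⟩, hS⟩
    · exact he
    · exact absurd hS (mem_compl.1 p.1.2)
  · exact fun he => ⟨Or.inl he, (mem_product.1 (hF he)).1⟩

theorem comap_union_map_complEdgeEmbedding (hF : F ⊆ S ×ˢ Sᶜ) (B : Finset (↥Sᶜ × ↥Sᶜ)) :
    ({p | complEdgeEmbedding S p ∈ F ∪ B.map (complEdgeEmbedding S)} : Finset (↥Sᶜ × ↥Sᶜ))
      = B := by
  ext p
  simp only [mem_filter, mem_univ, true_and, mem_union, mem_map']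
  exact or_iff_right fun h => mem_compl.1 p.1.2 (mem_product.1 (hF h)).1

theorem filter_fst_mem_subset_product (hE : ∀ e ∈ E, e.2 ∉ S) :
    E.filter (·.1 ∈ S) ⊆ S ×ˢ Sᶜ := fun e he =>
  mem_product.2 ⟨(mem_filter.1 he).2, mem_compl.2 (hE e (mem_filter.1 he).1)⟩

theorem filter_union_map_comap (hE : ∀ e ∈ E, e.2 ∉ S) :
    E.filter (·.1 ∈ S) ∪
      ({p | complEdgeEmbedding S p ∈ E} : Finset (↥Sᶜ × ↥Sᶜ)).map (complEdgeEmbedding S) = E := by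
  ext ⟨a, b⟩
  simp only [mem_union, mem_filter, mem_map, mem_univ, true_and]
  constructor
  · rintro (⟨h, -⟩ | ⟨p, h, hp⟩)
    · exact h
    · rwa [← hp]
  · intro h
    by_cases ha : a ∈ S
    · exact Or.inl ⟨h, ha⟩
    · exact Or.inr ⟨(⟨a, mem_compl.2 ha⟩, ⟨b, mem_compl.2 (hE _ h)⟩), h, rfl⟩

end Split

variable {R : Type*} [CommSemiring R]

noncomputable def dagPoly (α : Type*) [Fintype α] (w u : R) : R :=
  ∑ E : Finset (α × α) with IsAcyclic E, w ^ #E * u ^ #(sources E)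

theorem sum_pow_card_of_subset_sources (w : R) (S : Finset α) :
    ∑ E with IsAcyclic E ∧ S ⊆ sources E, w ^ #E
      = (1 + w) ^ (#S * #Sᶜ) * dagPoly (↥Sᶜ) w 1 := by
  have hF : (1 + w) ^ (#S * #Sᶜ) = ∑ F ∈ (S ×ˢ Sᶜ).powerset, w ^ #F := by
    simpa [add_comm] using (sum_pow_mul_eq_add_pow w 1 (S ×ˢ Sᶜ)).symm
  simp only [hF, dagPoly, one_pow, mul_one, sum_mul_sum, ← sum_product']
  -- A DAG having `S` among its sources splits into its edges out of `S`, an arbitrary subset of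
  -- `S ×ˢ Sᶜ`, and a DAG on `Sᶜ`.
  refine sum_nbij'
    (fun E => (E.filter (·.1 ∈ S), ({p | complEdgeEmbedding S p ∈ E} : Finset (↥Sᶜ × ↥Sᶜ))))
    (fun x => x.1 ∪ x.2.map (complEdgeEmbedding S)) ?_ ?_ ?_ ?_ ?_
  · intro E hE
    simp only [mem_filter, mem_univ, true_and, subset_sources_iff] at hE
    simp only [mem_product, mem_powerset, mem_filter, mem_univ, true_and]
    exact ⟨filter_fst_mem_subset_product hE.2, hE.1.comap _⟩
  · rintro ⟨F, B⟩ hx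
    simp only [mem_product, mem_powerset, mem_filter, mem_univ, true_and] at hx
    simp only [mem_filter, mem_univ, true_and, subset_sources_iff]
    refine ⟨hx.2.union_map_complEdgeEmbedding hx.1, fun e he => ?_⟩
    rcases mem_union.1 he with he | he
    · exact mem_compl.1 (mem_product.1 (hx.1 he)).2
    · obtain ⟨p, -, rfl⟩ := mem_map.1 he
      exact mem_compl.1 p.2.2
  · intro E hE
    simp only [mem_filter, mem_univ, true_and, subset_sources_iff] at hE
    exact filter_union_map_comap hE.2
  · rintro ⟨F, B⟩ hx
    simp only [mem_product, mem_powerset] at hx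
    exact Prod.ext (filter_union_map_complEdgeEmbedding hx.1 B)
      (comap_union_map_complEdgeEmbedding hx.1 B)
  · intro E hE
    simp only [mem_filter, mem_univ, true_and, subset_sources_iff] at hE
    conv_lhs => rw [← filter_union_map_comap hE.2]
    rw [card_union_of_disjoint
      (disjoint_map_complEdgeEmbedding (filter_fst_mem_subset_product hE.2) _), card_map, pow_add]

theorem dagPoly_congr (e : α ≃ β) (w u : R) : dagPoly α w u = dagPoly β w u := by
  refine sum_equiv (e.prodCongr e).finsetCongr (fun E => ?_) fun E _ => ?_
  · simp [isAcyclic_map_equiv]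
  · simp [sources_map_equiv]

theorem dagPoly_of_isEmpty [IsEmpty α] (w u : R) : dagPoly α w u = 1 := by
  have : IsAcyclic (∅ : Finset (α × α)) := fun a => isEmptyElim a
  simp [dagPoly, univ_unique, Finset.eq_empty_of_isEmpty, this]

theorem dagPoly_zero_of_nonempty [Nonempty α] (w : R) : dagPoly α w 0 = 0 :=
  sum_eq_zero fun E hE => by
    rw [zero_pow (mem_filter.1 hE).2.sources_nonempty.card_pos.ne', mul_zero]

theorem sources_eq_dagSources {n : ℕ} (E : Finset (Fin n × Fin n)) :
    sources E = dagSources E := by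
  ext v
  simp [sources, dagSources]

theorem tsum_dcount_eq_dagPoly [TopologicalSpace R] (w u : R) (n : ℕ) :
    ∑' p : ℕ × ℕ, (Dcount n p.1 p.2 : R) * w ^ p.1 * u ^ p.2 = dagPoly (Fin n) w u := by
  set dags : Finset (Finset (Fin n × Fin n)) := {E | IsAcyclic E}
  set φ : Finset (Fin n × Fin n) → ℕ × ℕ := fun E => (#E, #(sources E))
  have hfiber (p : ℕ × ℕ) : (Dcount n p.1 p.2 : R) * w ^ p.1 * u ^ p.2
      = ∑ E ∈ dags with φ E = p, w ^ #E * u ^ #(sources E) := by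
    rw [sum_congr (g := fun _ => w ^ p.1 * u ^ p.2) rfl fun E hE => by
      rw [← (mem_filter.1 hE).2], sum_const, nsmul_eq_mul, mul_assoc, Dcount]
    congr 3
    ext E
    simp only [mem_filter, mem_univ, true_and, dags, φ, Prod.ext_iff, sources_eq_dagSources]
    rfl
  rw [tsum_eq_sum (s := dags.image φ) fun p hp => ?_]
  · simp only [hfiber]
    exact sum_fiberwise_of_maps_to (fun E hE => mem_image_of_mem φ hE) _
  · rw [hfiber]
    exact sum_eq_zero fun E hE =>
      absurd ((mem_filter.1 hE).2 ▸ mem_image_of_mem φ (mem_filter.1 hE).1) hp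

section Ring

variable {R : Type*} [CommRing R]

theorem dagPoly_eq_sum_compl (w u : R) :
    dagPoly α w u
      = ∑ S : Finset α, (u - 1) ^ #S * ((1 + w) ^ (#S * #Sᶜ) * dagPoly (↥Sᶜ) w 1) := by
  have hu (E : Finset (α × α)) : u ^ #(sources E) = ∑ S ∈ (sources E).powerset, (u - 1) ^ #S := by
    simpa using (sum_pow_mul_eq_add_pow (u - 1) 1 (sources E)).symm
  rw [dagPoly]
  simp_rw [hu, mul_sum]
  rw [sum_comm' (t' := univ) (s' := fun S => {E | IsAcyclic E ∧ S ⊆ sources E})]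
  · refine sum_congr rfl fun S _ => ?_
    rw [← sum_pow_card_of_subset_sources, mul_sum]
    exact sum_congr rfl fun E _ => mul_comm _ _
  · simp

theorem dagPoly_fin_eq_graphicConv (w u : R) (n : ℕ) :
    dagPoly (Fin n) w u
      = graphicConv (1 + w) (fun i => (u - 1) ^ i) (fun j => dagPoly (Fin j) w 1) n := by
  rw [dagPoly_eq_sum_compl]
  set g : ℕ → R := fun k => (u - 1) ^ k * ((1 + w) ^ (k * (n - k)) * dagPoly (Fin (n - k)) w 1)
  refine (sum_congr (g := fun S => g #S) rfl fun S _ => ?_).trans ?_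
  · rw [dagPoly_congr (Fintype.equivFinOfCardEq (n := n - #S) ?_)]
    · simp only [g, card_compl, Fintype.card_fin]
    · simp only [Fintype.card_coe, card_compl, Fintype.card_fin]
  rw [← powerset_univ, sum_powerset_apply_card, card_univ, Fintype.card_fin,
    graphicConv_eq_sum_range]
  refine sum_congr rfl fun k _ => ?_
  rw [nsmul_eq_mul]
  ring

theorem graphicConv_neg_one_pow_dagPoly (w : R) :
    graphicConv (1 + w) (fun i => (-1) ^ i) (fun j => dagPoly (Fin j) w 1)
      = Pi.single 0 1 := by
  funext n
  rw [← zero_sub, ← dagPoly_fin_eq_graphicConv]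
  rcases n with _ | n
  · exact dagPoly_of_isEmpty w 0
  · exact dagPoly_zero_of_nonempty w

end Ring

end LabelledDAG

open LabelledDAG

/-- Coefficient-wise form of
$\mathrm{DAG}(z,w,u) = \mathrm{Set}((u-1)z,w)/\mathrm{Set}(-z,w)$:
$\sum_{k=0}^n (-1)^k \binom nk (1+w)^{k(n-k)} Q_{n-k}(w,u) = (u-1)^n$,
where $Q_j(w,u) = \sum_{m,s} D(j,m,s) w^m u^s$. -/
theorem dag_source_identity (n : ℕ) (w u : ℝ) :
    ∑ k ∈ Finset.range (n + 1),
        (-1 : ℝ) ^ k * (n.choose k) * (1 + w) ^ (k * (n - k))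
          * ∑' p : ℕ × ℕ, (Dcount (n - k) p.1 p.2 : ℝ) * w ^ p.1 * u ^ p.2
      = (u - 1) ^ n := by
  have hQ : (fun j => dagPoly (Fin j) w u)
      = graphicConv (1 + w) (fun i => (u - 1) ^ i) (fun j => dagPoly (Fin j) w 1) :=
    funext (dagPoly_fin_eq_graphicConv w u)
  calc _ = graphicConv (1 + w) (fun k => (-1) ^ k) (fun j => dagPoly (Fin j) w u) n := by
        rw [graphicConv_eq_sum_range]
        refine sum_congr rfl fun k _ => ?_
        rw [tsum_dcount_eq_dagPoly]
        ring
    _ = graphicConv (1 + w) (fun i => (u - 1) ^ i)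
          (graphicConv (1 + w) (fun k => (-1) ^ k) (fun j => dagPoly (Fin j) w 1)) n := by
        rw [hQ, graphicConv_left_comm]
    _ = (u - 1) ^ n := by
        rw [graphicConv_neg_one_pow_dagPoly, graphicConv_single_zero_one]
end

section
/- Let w > 0 and define, for real z and u with Set(−z,w) ≠ 0, the function F(z,u) := Set((u−1)z, w) / Set(−z, w). Then for all real u and all real z such that Set(−z,w) ≠ 0 and Set(−z/(1+w), w) ≠ 0, one has u · ∂_u F(z,u) = u z · F(z/(1+w), u) · F(z, w/(1+w)). (This is the peeling-process identity u ∂_u DAG(z,w,u) = uz · DAG(z/(1+w),w,u) · DAG(z,w,w/(1+w)).) -/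
open Nat

namespace SetGF

noncomputable def denom (w : ℝ) (n : ℕ) : ℝ := (1 + w) ^ n.choose 2 * n !

theorem eq_tsum (z w : ℝ) : SetGF z w = ∑' n, z ^ n / denom w n := rfl

variable {w : ℝ}

theorem denom_succ (w : ℝ) (n : ℕ) : denom w (n + 1) = (1 + w) ^ n * (n + 1) * denom w n := by
  have hchoose : (n + 1).choose 2 = n.choose 2 + n := by
    simp [Nat.choose_succ_succ, Nat.add_comm]
  simp only [denom, hchoose, pow_add, factorial_succ, cast_mul, cast_succ]
  ring

theorem factorial_le_denom (hw : 0 ≤ w) (n : ℕ) : (n ! : ℝ) ≤ denom w n :=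
  le_mul_of_one_le_left (by positivity) (one_le_pow₀ (by linarith))

theorem denom_pos (hw : 0 ≤ w) (n : ℕ) : 0 < denom w n :=
  (cast_pos.2 n.factorial_pos).trans_le (factorial_le_denom hw n)

theorem summable_pow_div_denom (hw : 0 ≤ w) (y : ℝ) : Summable fun n => y ^ n / denom w n := by
  refine .of_norm_bounded (Real.summable_pow_div_factorial |y|) fun n => ?_
  rw [norm_div, Real.norm_of_nonneg (denom_pos hw n).le, norm_pow, Real.norm_eq_abs]
  gcongr
  exact factorial_le_denom hw n

theorem norm_deriv_term_le (hw : 0 ≤ w) {R t : ℝ} (hR : 1 ≤ R) (ht : |t| ≤ R) (n : ℕ) :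
    ‖n * t ^ (n - 1) / denom w n‖ ≤ (2 * R) ^ n / n ! := by
  have hpow : |t| ^ (n - 1) ≤ R ^ n :=
    (pow_le_pow_left₀ (abs_nonneg t) ht _).trans (pow_le_pow_right₀ hR (n.sub_le 1))
  have hn : (n : ℝ) ≤ 2 ^ n := by exact_mod_cast n.lt_two_pow_self.le
  rw [norm_div, Real.norm_of_nonneg (denom_pos hw n).le, norm_mul, norm_pow, Real.norm_natCast,
    Real.norm_eq_abs, mul_pow]
  gcongr
  exact factorial_le_denom hw n

theorem tsum_deriv_terms (hw : 0 ≤ w) (z : ℝ) :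
    ∑' n : ℕ, n * z ^ (n - 1) / denom w n = SetGF (z / (1 + w)) w := by
  have hshift : ∀ m : ℕ, ((m + 1 : ℕ) : ℝ) * z ^ (m + 1 - 1) / denom w (m + 1)
      = (z / (1 + w)) ^ m / denom w m := by
    intro m
    have h1w : (1 + w) ^ m ≠ 0 := by positivity
    have hm : (m : ℝ) + 1 ≠ 0 := by positivity
    rw [denom_succ, Nat.add_sub_cancel, div_pow, cast_succ]
    field_simp
  rw [tsum_eq_zero_add', eq_tsum]
  · simp only [hshift, CharP.cast_eq_zero, zero_mul, zero_div, zero_add]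
  · simpa only [hshift] using summable_pow_div_denom hw (z / (1 + w))

theorem hasDerivAt (hw : 0 ≤ w) (z : ℝ) :
    HasDerivAt (fun y => SetGF y w) (SetGF (z / (1 + w)) w) z := by
  set R := |z| + 1
  have hR : 1 ≤ R := le_add_of_nonneg_left (abs_nonneg z)
  have hball : ∀ t ∈ Metric.ball z 1, |t| ≤ R := fun t ht => by
    have := abs_sub_abs_le_abs_sub t z
    rw [Metric.mem_ball, Real.dist_eq] at ht
    linarith
  have hterm : ∀ (n : ℕ) (t : ℝ), HasDerivAt (fun y => y ^ n / denom w n)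
      (n * t ^ (n - 1) / denom w n) t := fun n t => (hasDerivAt_pow n t).div_const _
  rw [← tsum_deriv_terms hw]
  exact hasDerivAt_tsum_of_isPreconnected (Real.summable_pow_div_factorial (2 * R))
    Metric.isOpen_ball (convex_ball z 1).isPreconnected (fun n t _ => hterm n t)
    (fun n t ht => norm_deriv_term_le hw hR (hball t ht) n) (Metric.mem_ball_self one_pos)
    (summable_pow_div_denom hw z) (Metric.mem_ball_self one_pos)

end SetGF

theorem peeling_identity_general (w : ℝ) (hw : 0 < w) (z u : ℝ)
    (h2 : SetGF (-(z / (1 + w))) w ≠ 0) :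
    u * deriv (fun t : ℝ => SetGF ((t - 1) * z) w / SetGF (-z) w) u
      = u * z * (SetGF ((u - 1) * (z / (1 + w))) w / SetGF (-(z / (1 + w))) w)
        * (SetGF ((w / (1 + w) - 1) * z) w / SetGF (-z) w) := by
  have hinner : HasDerivAt (fun t : ℝ => (t - 1) * z) z u := by
    simpa using ((hasDerivAt_id u).sub_const 1).mul_const z
  have hderiv : deriv (fun t : ℝ => SetGF ((t - 1) * z) w / SetGF (-z) w) u
      = SetGF ((u - 1) * (z / (1 + w))) w * z / SetGF (-z) w := by
    rw [← mul_div_assoc]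
    exact (((SetGF.hasDerivAt hw.le _).comp u hinner).div_const _).deriv
  have hsource : (w / (1 + w) - 1) * z = -(z / (1 + w)) := by
    field_simp
    ring
  rw [hderiv, hsource, mul_assoc (u * z), div_mul_div_cancel₀ h2]
  ring

/-- With `DAG(z,w,u) = Set((u-1)z,w)/Set(-z,w)`, the peeling-process
identity `u ∂_u DAG(z,w,u) = u z · DAG(z/(1+w),w,u) · DAG(z,w,w/(1+w))` holds at every
real `z, u` where the denominators are nonzero. -/
theorem peeling_identity (w : ℝ) (hw : 0 < w) (z u : ℝ)
    (h1 : SetGF (-z) w ≠ 0) (h2 : SetGF (-(z / (1 + w))) w ≠ 0) :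
    u * deriv (fun t : ℝ => SetGF ((t - 1) * z) w / SetGF (-z) w) u
      = u * z * (SetGF ((u - 1) * (z / (1 + w))) w / SetGF (-(z / (1 + w))) w)
        * (SetGF ((w / (1 + w) - 1) * z) w / SetGF (-z) w) :=
  peeling_identity_general w hw z u h2
end

section
/- For every natural number n ≥ 1, the following identity of polynomials in the variables w and u holds: Σ_{m,k} k · D(n,m,k) w^m u^k = n · Σ_{n_1 + n_2 = n − 1} C(n−1, n_1) (1+w)^{n_1 n_2} · u · (Σ_{m_1,k_1} D(n_1,m_1,k_1) w^{m_1} u^{k_1}) · (Σ_{m_2,k_2} D(n_2,m_2,k_2) w^{m_2 + k_2} (1+w)^{n_2 − k_2}). (This is the coefficient-wise combinatorial form of the peeling-process identity.) -/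
/-! Counting each DAG once per source, fix a source `v`, let `S₂` be the set of vertices
reachable from `v` and `S₁` the set of the remaining vertices other than `v`. No edge enters `v`
and no edge leaves `S₂ ∪ {v}` towards `S₁`, so the DAG is the disjoint union of a DAG on `S₁`,
a DAG on `S₂` and a set `X` of edges from `S₂ᶜ` into `S₂`; conversely such a triple is a DAG
with source `v` reaching exactly `S₂` precisely when `X` contains the edge from `v` to every
source of the DAG on `S₂`. Its sources are `v` and the sources of the DAG on `S₁`. Summing
`w ^ #X` over the admissible `X` gives `(1 + w) ^ (#S₁ * #S₂) * w ^ k * (1 + w) ^ (#S₂ - k)`,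
where `k` is the number of sources of the DAG on `S₂`, and summing over `S₂` by size gives the
binomial coefficients. -/

open Finset Relation

namespace DagCount

open scoped Classical

theorem transGen_map_iff {α β : Type*} {r : α → α → Prop} {f : α → β}
    (hf : Function.Injective f) {a b : α} :
    TransGen (Relation.Map r f f) (f a) (f b) ↔ TransGen r a b := by
  refine ⟨fun h => ?_, fun h => h.lift f fun a b h => ⟨a, b, h, rfl, rfl⟩⟩
  suffices ∀ x y, TransGen (Relation.Map r f f) x y →
      ∀ a b, f a = x → f b = y → TransGen r a b from this _ _ h a b rfl rfl
  intro x y hxy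
  induction hxy with
  | single hxy =>
    rintro a b rfl rfl
    obtain ⟨a', b', h, ha, hb⟩ := hxy
    exact .single (hf ha ▸ hf hb ▸ h)
  | tail _ hcy ih =>
    rintro a b rfl rfl
    obtain ⟨c, b', h, hc, hb⟩ := hcy
    exact (ih a c rfl hc).tail (hf hb ▸ h)

theorem sum_powerset_union_inter {β M : Type*} [DecidableEq β] [AddCommMonoid M]
    {A B : Finset β} (h : Disjoint A B) (g : Finset β → Finset β → M) :
    ∑ E ∈ (A ∪ B).powerset, g (E ∩ A) (E ∩ B) = ∑ E₁ ∈ A.powerset, ∑ E₂ ∈ B.powerset, g E₁ E₂ := by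
  rw [← sum_product']
  refine sum_nbij' (fun E => (E ∩ A, E ∩ B)) (fun p => p.1 ∪ p.2) ?_ ?_ ?_ ?_ fun _ _ => rfl
  · simp
  · intro p hp
    simp only [mem_product, mem_powerset] at hp ⊢
    exact union_subset_union hp.1 hp.2
  · intro E hE
    rw [← inter_union_distrib_left, inter_eq_left.2 (mem_powerset.1 hE)]
  · rintro ⟨E₁, E₂⟩ hE
    simp only [mem_product, mem_powerset] at hE
    have h₁ : E₁ ∩ B = ∅ := disjoint_iff_inter_eq_empty.1 (h.mono_left hE.1)
    have h₂ : E₂ ∩ A = ∅ := disjoint_iff_inter_eq_empty.1 (h.symm.mono_left hE.2)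
    simp [union_inter_distrib_right, inter_eq_left.2 hE.1, inter_eq_left.2 hE.2, h₁, h₂]

theorem sum_superset_pow {β R : Type*} [DecidableEq β] [CommSemiring R] {A C : Finset β}
    (h : A ⊆ C) (x : R) :
    ∑ X ∈ C.powerset, (if A ⊆ X then x ^ #X else 0) = x ^ #A * (x + 1) ^ (#C - #A) := by
  have key : ∀ X ∈ C.powerset, (if A ⊆ X then x ^ #X else 0) =
      if X ∩ A = A then x ^ #A * x ^ #(X ∩ (C \ A)) else 0 := by
    intro X hX
    simp only [inter_eq_right]
    split_ifs with hAX
    · rw [← pow_add, ← inter_sdiff_assoc, inter_eq_left.2 (mem_powerset.1 hX),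
        add_comm, card_sdiff_add_card_eq_card hAX]
    · rfl
  calc ∑ X ∈ C.powerset, (if A ⊆ X then x ^ #X else 0)
      = ∑ X ∈ (A ∪ (C \ A)).powerset,
          (if X ∩ A = A then x ^ #A * x ^ #(X ∩ (C \ A)) else 0) := by
        rw [union_sdiff_of_subset h]
        exact sum_congr rfl key
    _ = ∑ Y ∈ A.powerset, ∑ Z ∈ (C \ A).powerset, if Y = A then x ^ #A * x ^ #Z else 0 :=
        sum_powerset_union_inter disjoint_sdiff fun Y Z => if Y = A then x ^ #A * x ^ #Z else 0
    _ = x ^ #A * (x + 1) ^ (#C - #A) := by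
        have hpow := sum_pow_mul_eq_add_pow x 1 (C \ A)
        simp only [one_pow, mul_one] at hpow
        rw [sum_comm]
        simp [← mul_sum, hpow, card_sdiff_of_subset h]

theorem card_eq_card_inter_add_card_inter {β : Type*} [DecidableEq β] {A B E : Finset β}
    (h : Disjoint A B) (hE : E ⊆ A ∪ B) : #E = #(E ∩ A) + #(E ∩ B) := by
  rw [← card_union_of_disjoint (h.mono inter_subset_right inter_subset_right),
    ← inter_union_distrib_left, inter_eq_left.2 hE]

theorem mem_dagSources {n : ℕ} {E : Finset (Fin n × Fin n)} {v : Fin n} :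
    v ∈ dagSources E ↔ ∀ u, (u, v) ∉ E := by
  simp [dagSources]

theorem DAcyclic.mono {n : ℕ} {E F : Finset (Fin n × Fin n)} (h : DAcyclic E) (hF : F ⊆ E) :
    DAcyclic F :=
  fun x hx => h x (TransGen.mono (fun _ _ hab => hF hab) x x hx)

theorem dAcyclic_map_iff {k n : ℕ} (g : Fin k ↪ Fin n) (E : Finset (Fin k × Fin k)) :
    DAcyclic (E.map (g.prodMap g)) ↔ DAcyclic E := by
  have hrel : (fun x y => (x, y) ∈ E.map (g.prodMap g)) =
      Relation.Map (fun a b => (a, b) ∈ E) g g := by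
    ext x y
    simp [Relation.Map, eq_comm]
  rw [DAcyclic, DAcyclic, hrel]
  refine ⟨fun h a ha => h (g a) ((transGen_map_iff g.injective).2 ha), fun h x hx => ?_⟩
  obtain ⟨c, -, a, b, -, -, rfl⟩ := TransGen.tail'_iff.1 hx
  exact h b ((transGen_map_iff g.injective).1 hx)

theorem dagSources_map_inter {k n : ℕ} (g : Fin k ↪ Fin n) (E : Finset (Fin k × Fin k)) :
    dagSources (E.map (g.prodMap g)) ∩ univ.map g = (dagSources E).map g := by
  ext x
  simp only [mem_inter, mem_dagSources, mem_map, mem_univ, true_and, Prod.exists,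
    Function.Embedding.coe_prodMap, Prod.map, Prod.mk.injEq, not_exists, not_and]
  constructor
  · rintro ⟨h, a, rfl⟩
    exact ⟨a, fun u hu => h (g u) u a hu rfl rfl, rfl⟩
  · rintro ⟨a, h, rfl⟩
    exact ⟨fun u b c hbc _ hc => h b (g.injective hc ▸ hbc), a, rfl⟩

noncomputable def dagSum (n : ℕ) (f : ℕ → ℕ → ℝ) : ℝ :=
  ∑ E ∈ univ.filter (DAcyclic (n := n)), f #E #(dagSources E)

theorem Dcount_mul_eq_sum (n m k : ℕ) (c : ℝ) :
    (Dcount n m k : ℝ) * c =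
      ∑ E ∈ univ.filter (DAcyclic (n := n)), if (m, k) = (#E, #(dagSources E)) then c else 0 := by
  rw [← sum_filter, sum_const, nsmul_eq_mul, filter_filter, Dcount]
  congr 3
  ext E
  simp [eq_comm]

theorem tsum_Dcount_mul (n : ℕ) (f : ℕ → ℕ → ℝ) :
    ∑' p : ℕ × ℕ, (Dcount n p.1 p.2 : ℝ) * f p.1 p.2 = dagSum n f := by
  simp_rw [Dcount_mul_eq_sum, Prod.mk.eta]
  rw [Summable.tsum_finsetSum fun E _ => ?_]
  · simp_rw [tsum_ite_eq]
    rfl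
  · refine (hasSum_ite_eq (#E, #(dagSources E)) (f #E #(dagSources E))).summable.congr fun p => ?_
    split_ifs with h <;> simp [h]

noncomputable def dagsOn {n : ℕ} (S : Finset (Fin n)) : Finset (Finset (Fin n × Fin n)) :=
  (S ×ˢ S).powerset.filter DAcyclic

theorem dagsOn_map_univ {k n : ℕ} (g : Fin k ↪ Fin n) :
    dagsOn (univ.map g) =
      (univ.filter (DAcyclic (n := k))).map (mapEmbedding (g.prodMap g)).toEmbedding := by
  ext E
  simp only [dagsOn, mem_filter, mem_powerset, mem_map, mem_univ, true_and,
    RelEmbedding.coe_toEmbedding, mapEmbedding_apply, ← prodMap_map_product, univ_product_univ]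
  constructor
  · rintro ⟨hE, hacy⟩
    obtain ⟨E', -, rfl⟩ := subset_map_iff.1 hE
    exact ⟨E', (dAcyclic_map_iff g E').1 hacy, rfl⟩
  · rintro ⟨E', hacy, rfl⟩
    exact ⟨map_subset_map.2 (subset_univ _), (dAcyclic_map_iff g E').2 hacy⟩

theorem sum_dagsOn {n : ℕ} (S : Finset (Fin n)) (f : ℕ → ℕ → ℝ) :
    ∑ E ∈ dagsOn S, f #E #(dagSources E ∩ S) = dagSum #S f := by
  conv_lhs => rw [← map_orderEmbOfFin_univ S rfl]
  rw [dagsOn_map_univ, sum_map]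
  simp only [RelEmbedding.coe_toEmbedding, mapEmbedding_apply, card_map, dagSources_map_inter]
  rfl

noncomputable def reachSet {n : ℕ} (E : Finset (Fin n × Fin n)) (v : Fin n) : Finset (Fin n) :=
  univ.filter (TransGen (fun a b => (a, b) ∈ E) v)

theorem mem_reachSet {n : ℕ} {E : Finset (Fin n × Fin n)} {v x : Fin n} :
    x ∈ reachSet E v ↔ TransGen (fun a b => (a, b) ∈ E) v x := by
  simp [reachSet]

def splitEdges {n : ℕ} (S₁ S₂ : Finset (Fin n)) : Finset (Fin n × Fin n) :=
  S₁ ×ˢ S₁ ∪ (S₂ ×ˢ S₂ ∪ S₂ᶜ ×ˢ S₂)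

theorem mem_splitEdges {n : ℕ} {S₁ S₂ : Finset (Fin n)} {a b : Fin n} :
    (a, b) ∈ splitEdges S₁ S₂ ↔ a ∈ S₁ ∧ b ∈ S₁ ∨ b ∈ S₂ := by
  simp only [splitEdges, mem_union, mem_product, mem_compl]
  tauto

section Split

variable {n : ℕ} {v : Fin n} {S₁ S₂ : Finset (Fin n)} {E : Finset (Fin n × Fin n)}

theorem mem_inter_left_of_not_mem (hE : E ⊆ splitEdges S₁ S₂) {a b : Fin n} (hab : (a, b) ∈ E)
    (hb : b ∉ S₂) : (a, b) ∈ E ∩ S₁ ×ˢ S₁ := by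
  have := mem_splitEdges.1 (hE hab)
  simp_all

theorem mem_inter_right_of_mem (h : Disjoint S₁ S₂) (hE : E ⊆ splitEdges S₁ S₂) {a b : Fin n}
    (hab : (a, b) ∈ E) (ha : a ∈ S₂) : (a, b) ∈ E ∩ S₂ ×ˢ S₂ := by
  rcases mem_splitEdges.1 (hE hab) with ⟨ha₁, -⟩ | hb
  · exact absurd ha (disjoint_left.1 h ha₁)
  · exact mem_inter.2 ⟨hab, mem_product.2 ⟨ha, hb⟩⟩

theorem transGen_inter_left (h : Disjoint S₁ S₂) (hE : E ⊆ splitEdges S₁ S₂) {a b : Fin n}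
    (hab : TransGen (fun a b => (a, b) ∈ E) a b) (hb : b ∉ S₂) :
    TransGen (fun a b => (a, b) ∈ E ∩ S₁ ×ˢ S₁) a b := by
  induction hab with
  | single hab => exact .single (mem_inter_left_of_not_mem hE hab hb)
  | tail _ hcb ih =>
    have hcb := mem_inter_left_of_not_mem hE hcb hb
    exact (ih (disjoint_left.1 h (mem_product.1 (mem_inter.1 hcb).2).1)).tail hcb

theorem transGen_inter_right (h : Disjoint S₁ S₂) (hE : E ⊆ splitEdges S₁ S₂) {a b : Fin n}
    (hab : TransGen (fun a b => (a, b) ∈ E) a b) (ha : a ∈ S₂) :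
    TransGen (fun a b => (a, b) ∈ E ∩ S₂ ×ˢ S₂) a b := by
  induction hab with
  | single hab => exact .single (mem_inter_right_of_mem h hE hab ha)
  | tail _ hcb ih =>
    obtain ⟨_, -, hc⟩ := TransGen.tail'_iff.1 ih
    exact ih.tail (mem_inter_right_of_mem h hE hcb (mem_product.1 (mem_inter.1 hc).2).2)

theorem dAcyclic_of_subset_splitEdges (h : Disjoint S₁ S₂) (hE : E ⊆ splitEdges S₁ S₂)
    (h₁ : DAcyclic (E ∩ S₁ ×ˢ S₁)) (h₂ : DAcyclic (E ∩ S₂ ×ˢ S₂)) : DAcyclic E := by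
  intro x hx
  by_cases hx₂ : x ∈ S₂
  · exact h₂ x (transGen_inter_right h hE hx hx₂)
  · exact h₁ x (transGen_inter_left h hE hx hx₂)

theorem reachSet_subset (h : Disjoint S₁ S₂) (hE : E ⊆ splitEdges S₁ S₂) (hv : v ∉ S₁) :
    reachSet E v ⊆ S₂ := by
  intro x hx
  by_contra hx₂
  obtain ⟨_, hvc, -⟩ := TransGen.head'_iff.1 (transGen_inter_left h hE (mem_reachSet.1 hx) hx₂)
  exact hv (mem_product.1 (mem_inter.1 hvc).2).1

theorem wellFounded_of_dAcyclic (h : DAcyclic E) : WellFounded fun a b => (a, b) ∈ E := by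
  have : IsTrans (Fin n) (TransGen fun a b => (a, b) ∈ E) := ⟨fun _ _ _ => TransGen.trans⟩
  have : Std.Irrefl (TransGen fun a b => (a, b) ∈ E) := ⟨h⟩
  exact Subrelation.wf (r := TransGen fun a b => (a, b) ∈ E) (fun h => TransGen.single h)
    (Finite.wellFounded_of_trans_of_irrefl _)

theorem subset_reachSet_of_sources (h₂ : DAcyclic (E ∩ S₂ ×ˢ S₂))
    (hsrc : {v} ×ˢ (dagSources (E ∩ S₂ ×ˢ S₂) ∩ S₂) ⊆ E) : S₂ ⊆ reachSet E v := by
  intro x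
  induction x using (wellFounded_of_dAcyclic h₂).induction with
  | _ x ih =>
    intro hx
    rw [mem_reachSet]
    by_cases hxsrc : x ∈ dagSources (E ∩ S₂ ×ˢ S₂)
    · exact .single (hsrc (mem_product.2 ⟨mem_singleton_self v, mem_inter.2 ⟨hxsrc, hx⟩⟩))
    · obtain ⟨z, hzx⟩ : ∃ z, (z, x) ∈ E ∩ S₂ ×ˢ S₂ := by simpa [mem_dagSources] using hxsrc
      have hz : z ∈ S₂ := (mem_product.1 (mem_inter.1 hzx).2).1
      exact (mem_reachSet.1 (ih z hzx hz)).tail (mem_inter.1 hzx).1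

theorem sources_subset_of_reachSet (h : Disjoint S₁ S₂) (hE : E ⊆ splitEdges S₁ S₂)
    (hv : v ∉ S₁) (hreach : S₂ ⊆ reachSet E v) :
    {v} ×ˢ (dagSources (E ∩ S₂ ×ˢ S₂) ∩ S₂) ⊆ E := by
  rintro ⟨a, x⟩ hax
  simp only [mem_product, mem_singleton, mem_inter, mem_dagSources] at hax
  obtain ⟨rfl, hxsrc, hx⟩ := hax
  obtain ⟨b, hvb, hbx⟩ := TransGen.tail'_iff.1 (mem_reachSet.1 (hreach hx))
  rcases reflTransGen_iff_eq_or_transGen.1 hvb with rfl | hvb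
  · exact hbx
  · have hb := reachSet_subset h hE hv (mem_reachSet.2 hvb)
    exact absurd ⟨hbx, hb, hx⟩ (hxsrc b)

theorem mem_dagSources_of_subset_splitEdges (hE : E ⊆ splitEdges S₁ S₂) (hv₁ : v ∉ S₁)
    (hv₂ : v ∉ S₂) : v ∈ dagSources E :=
  mem_dagSources.2 fun _ hav =>
    hv₁ (mem_product.1 (mem_inter.1 (mem_inter_left_of_not_mem hE hav hv₂)).2).2

theorem dagSources_eq_insert (hS₁ : ∀ x, x ∈ S₁ ↔ x ≠ v ∧ x ∉ S₂) (hv : v ∉ S₂)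
    (hE : E ⊆ splitEdges S₁ S₂) (hreach : S₂ ⊆ reachSet E v) :
    dagSources E = insert v (dagSources (E ∩ S₁ ×ˢ S₁) ∩ S₁) := by
  ext x
  rw [mem_insert, mem_inter, hS₁]
  by_cases hxv : x = v
  · subst hxv
    simpa using mem_dagSources_of_subset_splitEdges hE (fun h => ((hS₁ x).1 h).1 rfl) hv
  by_cases hx : x ∈ S₂
  · obtain ⟨b, -, hbx⟩ := TransGen.tail'_iff.1 (mem_reachSet.1 (hreach hx))
    simpa [hxv, hx, mem_dagSources] using ⟨b, hbx⟩
  · simp only [hxv, hx, mem_dagSources, false_or, ne_eq, not_false_eq_true, and_true]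
    exact ⟨fun h a hax => h a (mem_inter.1 hax).1,
      fun h a hax => h a (mem_inter_left_of_not_mem hE hax hx)⟩

theorem subset_splitEdges_of_reachSet (hS₁ : ∀ x, x ∈ S₁ ↔ x ≠ v ∧ x ∉ S₂)
    (hv : v ∈ dagSources E) (hreach : reachSet E v = S₂) : E ⊆ splitEdges S₁ S₂ := by
  rintro ⟨a, b⟩ hab
  rw [mem_splitEdges, hS₁, hS₁]
  by_cases hb : b ∈ S₂
  · exact .inr hb
  have hav : a ≠ v := by
    rintro rfl
    exact hb (hreach ▸ mem_reachSet.2 (.single hab))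
  have ha : a ∉ S₂ := fun ha =>
    hb (hreach ▸ mem_reachSet.2 ((mem_reachSet.1 (hreach ▸ ha)).tail hab))
  have hbv : b ≠ v := by
    rintro rfl
    exact mem_dagSources.1 hv a hab
  exact .inl ⟨⟨hav, ha⟩, hbv, hb⟩

theorem dAcyclic_reachSet_iff (hS₁ : ∀ x, x ∈ S₁ ↔ x ≠ v ∧ x ∉ S₂) (hv : v ∉ S₂) :
    (DAcyclic E ∧ v ∈ dagSources E ∧ reachSet E v = S₂) ↔
      E ⊆ splitEdges S₁ S₂ ∧ DAcyclic (E ∩ S₁ ×ˢ S₁) ∧ DAcyclic (E ∩ S₂ ×ˢ S₂) ∧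
        {v} ×ˢ (dagSources (E ∩ S₂ ×ˢ S₂) ∩ S₂) ⊆ E := by
  have h : Disjoint S₁ S₂ := disjoint_left.2 fun x hx => ((hS₁ x).1 hx).2
  have hv₁ : v ∉ S₁ := fun hv₁ => ((hS₁ v).1 hv₁).1 rfl
  constructor
  · rintro ⟨hacy, hsrc, hreach⟩
    have hE := subset_splitEdges_of_reachSet hS₁ hsrc hreach
    exact ⟨hE, DAcyclic.mono hacy inter_subset_left, DAcyclic.mono hacy inter_subset_left,
      sources_subset_of_reachSet h hE hv₁ hreach.ge⟩
  · rintro ⟨hE, h₁, h₂, hsrc⟩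
    exact ⟨dAcyclic_of_subset_splitEdges h hE h₁ h₂,
      mem_dagSources_of_subset_splitEdges hE hv₁ hv,
      (reachSet_subset h hE hv₁).antisymm (subset_reachSet_of_sources h₂ hsrc)⟩

theorem disjoint_splitEdges_blocks (h : Disjoint S₁ S₂) :
    Disjoint (S₁ ×ˢ S₁) (S₂ ×ˢ S₂ ∪ S₂ᶜ ×ˢ S₂) ∧ Disjoint (S₂ ×ˢ S₂) (S₂ᶜ ×ˢ S₂) :=
  ⟨disjoint_union_right.2 ⟨disjoint_product.2 (.inr h), disjoint_product.2 (.inr h)⟩,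
    disjoint_product.2 (.inl disjoint_compl_right)⟩

theorem card_eq_of_subset_splitEdges (h : Disjoint S₁ S₂) (hE : E ⊆ splitEdges S₁ S₂) :
    #E = #(E ∩ S₁ ×ˢ S₁) + #(E ∩ S₂ ×ˢ S₂) + #(E ∩ S₂ᶜ ×ˢ S₂) := by
  obtain ⟨h₁, h₂⟩ := disjoint_splitEdges_blocks h
  rw [card_eq_card_inter_add_card_inter h₁ hE,
    card_eq_card_inter_add_card_inter h₂ inter_subset_right, add_assoc]
  simp only [inter_assoc, union_inter_cancel_left, union_inter_cancel_right]

theorem sum_powerset_splitEdges {M : Type*} [AddCommMonoid M] (h : Disjoint S₁ S₂)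
    (H : Finset (Fin n × Fin n) → Finset (Fin n × Fin n) → Finset (Fin n × Fin n) → M) :
    ∑ E ∈ (splitEdges S₁ S₂).powerset, H (E ∩ S₁ ×ˢ S₁) (E ∩ S₂ ×ˢ S₂) (E ∩ S₂ᶜ ×ˢ S₂) =
      ∑ E₁ ∈ (S₁ ×ˢ S₁).powerset, ∑ E₂ ∈ (S₂ ×ˢ S₂).powerset, ∑ X ∈ (S₂ᶜ ×ˢ S₂).powerset,
        H E₁ E₂ X := by
  obtain ⟨h₁, h₂⟩ := disjoint_splitEdges_blocks h
  simp_rw [← sum_powerset_union_inter h₂ (H _),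
    ← sum_powerset_union_inter h₁ fun E₁ E' => H E₁ (E' ∩ S₂ ×ˢ S₂) (E' ∩ S₂ᶜ ×ˢ S₂)]
  simp only [splitEdges, inter_assoc, union_inter_cancel_left, union_inter_cancel_right]

theorem weight_eq_of_subset_splitEdges (hS₁ : ∀ x, x ∈ S₁ ↔ x ≠ v ∧ x ∉ S₂) (hv : v ∉ S₂)
    (hE : E ⊆ splitEdges S₁ S₂) (w u : ℝ) :
    (if DAcyclic (E ∩ S₁ ×ˢ S₁) ∧ DAcyclic (E ∩ S₂ ×ˢ S₂) ∧
        {v} ×ˢ (dagSources (E ∩ S₂ ×ˢ S₂) ∩ S₂) ⊆ E then w ^ #E * u ^ #(dagSources E) else 0) =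
      (if DAcyclic (E ∩ S₁ ×ˢ S₁) then
          w ^ #(E ∩ S₁ ×ˢ S₁) * u ^ #(dagSources (E ∩ S₁ ×ˢ S₁) ∩ S₁) else 0) * u *
        ((if DAcyclic (E ∩ S₂ ×ˢ S₂) then w ^ #(E ∩ S₂ ×ˢ S₂) else 0) *
          if {v} ×ˢ (dagSources (E ∩ S₂ ×ˢ S₂) ∩ S₂) ⊆ E ∩ S₂ᶜ ×ˢ S₂ then
            w ^ #(E ∩ S₂ᶜ ×ˢ S₂) else 0) := by
  have h : Disjoint S₁ S₂ := disjoint_left.2 fun x hx => ((hS₁ x).1 hx).2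
  have hX : {v} ×ˢ (dagSources (E ∩ S₂ ×ˢ S₂) ∩ S₂) ⊆ E ↔
      {v} ×ˢ (dagSources (E ∩ S₂ ×ˢ S₂) ∩ S₂) ⊆ E ∩ S₂ᶜ ×ˢ S₂ := by
    rw [subset_inter_iff, and_iff_left (product_subset_product
      (singleton_subset_iff.2 (mem_compl.2 hv)) inter_subset_right)]
  by_cases hc : DAcyclic (E ∩ S₁ ×ˢ S₁) ∧ DAcyclic (E ∩ S₂ ×ˢ S₂) ∧
      {v} ×ˢ (dagSources (E ∩ S₂ ×ˢ S₂) ∩ S₂) ⊆ E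
  · obtain ⟨h₁, h₂, hsrc⟩ := hc
    have hreach := subset_reachSet_of_sources h₂ hsrc
    have hv₁ : v ∉ dagSources (E ∩ S₁ ×ˢ S₁) ∩ S₁ := fun hv₁ =>
      ((hS₁ v).1 (mem_inter.1 hv₁).2).1 rfl
    rw [if_pos ⟨h₁, h₂, hsrc⟩, if_pos h₁, if_pos h₂, if_pos (hX.1 hsrc),
      card_eq_of_subset_splitEdges h hE, dagSources_eq_insert hS₁ hv hE hreach,
      card_insert_of_notMem hv₁]
    ring
  · rw [if_neg hc]
    simp only [not_and_or, hX] at hc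
    rcases hc with hc | hc | hc <;> simp only [if_neg hc, mul_zero, zero_mul]

theorem sum_reachSet_eq_sum_dagsOn (hS₁ : ∀ x, x ∈ S₁ ↔ x ≠ v ∧ x ∉ S₂) (hv : v ∉ S₂)
    (w u : ℝ) :
    ∑ E ∈ univ.filter (fun E => DAcyclic E ∧ v ∈ dagSources E ∧ reachSet E v = S₂),
        w ^ #E * u ^ #(dagSources E) =
      u * (∑ E ∈ dagsOn S₁, w ^ #E * u ^ #(dagSources E ∩ S₁)) *
        ∑ E ∈ dagsOn S₂, w ^ (#E + #(dagSources E ∩ S₂)) *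
          (1 + w) ^ (#S₂ᶜ * #S₂ - #(dagSources E ∩ S₂)) := by
  have h : Disjoint S₁ S₂ := disjoint_left.2 fun x hx => ((hS₁ x).1 hx).2
  have hfilter : univ.filter (fun E => DAcyclic E ∧ v ∈ dagSources E ∧ reachSet E v = S₂) =
      (splitEdges S₁ S₂).powerset.filter fun E => DAcyclic (E ∩ S₁ ×ˢ S₁) ∧
        DAcyclic (E ∩ S₂ ×ˢ S₂) ∧ {v} ×ˢ (dagSources (E ∩ S₂ ×ˢ S₂) ∩ S₂) ⊆ E := by
    ext E
    simp only [mem_filter, mem_univ, true_and, mem_powerset, dAcyclic_reachSet_iff hS₁ hv]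
  have hsrc (E₂ : Finset (Fin n × Fin n)) : {v} ×ˢ (dagSources E₂ ∩ S₂) ⊆ S₂ᶜ ×ˢ S₂ :=
    product_subset_product (singleton_subset_iff.2 (mem_compl.2 hv)) inter_subset_right
  rw [hfilter, sum_filter, sum_congr rfl fun E hE =>
    weight_eq_of_subset_splitEdges hS₁ hv (mem_powerset.1 hE) w u, sum_powerset_splitEdges h
    fun E₁ E₂ X => (if DAcyclic E₁ then w ^ #E₁ * u ^ #(dagSources E₁ ∩ S₁) else 0) * u *
      ((if DAcyclic E₂ then w ^ #E₂ else 0) *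
        if {v} ×ˢ (dagSources E₂ ∩ S₂) ⊆ X then w ^ #X else 0)]
  simp only [← mul_sum, sum_superset_pow (hsrc _), card_product, card_singleton, one_mul]
  simp only [← sum_mul, ite_mul, zero_mul, ← sum_filter, pow_add, add_comm w 1]
  rw [dagsOn, dagsOn]
  simp only [mul_assoc]
  ring

end Split

theorem dagSum_card_mul (n : ℕ) (f : ℕ → ℕ → ℝ) :
    dagSum n (fun m k => k * f m k) =
      ∑ v : Fin n, ∑ E ∈ univ.filter (fun E => DAcyclic E ∧ v ∈ dagSources E),
        f #E #(dagSources E) := by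
  calc dagSum n (fun m k => k * f m k)
      = ∑ E ∈ univ.filter DAcyclic, ∑ v, if v ∈ dagSources E then f #E #(dagSources E) else 0 := by
        refine sum_congr rfl fun E _ => ?_
        rw [sum_ite_mem, univ_inter, sum_const, nsmul_eq_mul]
    _ = _ := by
        rw [sum_comm]
        refine sum_congr rfl fun v _ => ?_
        rw [← sum_filter, filter_filter]

theorem sum_mem_dagSources_eq_sum_reachSet {n : ℕ} (v : Fin n)
    (F : Finset (Fin n × Fin n) → ℝ) :
    ∑ E ∈ univ.filter (fun E => DAcyclic E ∧ v ∈ dagSources E), F E =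
      ∑ S₂ ∈ (univ.erase v).powerset,
        ∑ E ∈ univ.filter (fun E => DAcyclic E ∧ v ∈ dagSources E ∧ reachSet E v = S₂), F E := by
  rw [← sum_fiberwise_of_maps_to (g := fun E => reachSet E v) (t := (univ.erase v).powerset)]
  · simp_rw [filter_filter, and_assoc]
  · intro E hE
    rw [mem_powerset]
    intro x hx
    refine mem_erase.2 ⟨?_, mem_univ x⟩
    rintro rfl
    exact (mem_filter.1 hE).2.1 x (mem_reachSet.1 hx)

theorem sum_reachSet_eq_dagSum {n : ℕ} {v : Fin n} {S₂ : Finset (Fin n)} (hv : v ∉ S₂)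
    (w u : ℝ) :
    ∑ E ∈ univ.filter (fun E => DAcyclic E ∧ v ∈ dagSources E ∧ reachSet E v = S₂),
        w ^ #E * u ^ #(dagSources E) =
      u * (1 + w) ^ ((n - 1 - #S₂) * #S₂) * dagSum (n - 1 - #S₂) (fun m k => w ^ m * u ^ k) *
        dagSum #S₂ (fun m k => w ^ (m + k) * (1 + w) ^ (#S₂ - k)) := by
  have hS₁ : ∀ x, x ∈ S₂ᶜ.erase v ↔ x ≠ v ∧ x ∉ S₂ := by simp
  have hcard₁ : #(S₂ᶜ.erase v) = n - 1 - #S₂ := by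
    rw [card_erase_of_mem (mem_compl.2 hv), card_compl, Fintype.card_fin, Nat.sub_right_comm]
  have hsum : ∑ E ∈ dagsOn S₂, w ^ (#E + #(dagSources E ∩ S₂)) *
        (1 + w) ^ (#S₂ᶜ * #S₂ - #(dagSources E ∩ S₂)) =
      (1 + w) ^ (#(S₂ᶜ.erase v) * #S₂) * ∑ E ∈ dagsOn S₂, w ^ (#E + #(dagSources E ∩ S₂)) *
        (1 + w) ^ (#S₂ - #(dagSources E ∩ S₂)) := by
    rw [mul_sum]
    refine sum_congr rfl fun E _ => ?_
    rw [← card_erase_add_one (mem_compl.2 hv), add_mul, one_mul,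
      Nat.add_sub_assoc (card_le_card inter_subset_right), pow_add]
    ring
  rw [sum_reachSet_eq_sum_dagsOn hS₁ hv, hsum, sum_dagsOn _ fun m k => w ^ m * u ^ k,
    sum_dagsOn S₂ fun m k => w ^ (m + k) * (1 + w) ^ (#S₂ - k), hcard₁]
  ring

theorem sum_mem_dagSources_eq_sum_range {n : ℕ} (v : Fin n) (w u : ℝ) :
    ∑ E ∈ univ.filter (fun E => DAcyclic E ∧ v ∈ dagSources E), w ^ #E * u ^ #(dagSources E) =
      ∑ n₁ ∈ range n, ((n - 1).choose n₁ : ℝ) * (1 + w) ^ (n₁ * (n - 1 - n₁)) * u *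
        dagSum n₁ (fun m k => w ^ m * u ^ k) *
        dagSum (n - 1 - n₁) (fun m k => w ^ (m + k) * (1 + w) ^ (n - 1 - n₁ - k)) := by
  have hcard : #(univ.erase v) = n - 1 := by
    rw [card_erase_of_mem (mem_univ v), card_univ, Fintype.card_fin]
  rw [sum_mem_dagSources_eq_sum_reachSet, sum_congr rfl fun S₂ hS₂ =>
    sum_reachSet_eq_dagSum (fun hv => (mem_erase.1 (mem_powerset.1 hS₂ hv)).1 rfl) w u,
    sum_powerset_apply_card (fun j => u * (1 + w) ^ ((n - 1 - j) * j) *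
      dagSum (n - 1 - j) (fun m k => w ^ m * u ^ k) *
      dagSum j (fun m k => w ^ (m + k) * (1 + w) ^ (j - k))), hcard, Nat.sub_add_cancel v.pos,
    ← sum_range_reflect]
  refine sum_congr rfl fun j hj => ?_
  have hjn : j ≤ n - 1 := Nat.le_sub_one_of_lt (mem_range.1 hj)
  rw [Nat.sub_sub_self hjn, Nat.choose_symm hjn, nsmul_eq_mul]
  ring

end DagCount

theorem peeling_coefficient_identity_general (n : ℕ) (w u : ℝ) :
    ∑' p : ℕ × ℕ, (p.2 : ℝ) * (Dcount n p.1 p.2) * w ^ p.1 * u ^ p.2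
      = n * ∑ n1 ∈ Finset.range n,
          ((n - 1).choose n1 : ℝ) * (1 + w) ^ (n1 * (n - 1 - n1)) * u
            * (∑' q : ℕ × ℕ, (Dcount n1 q.1 q.2 : ℝ) * w ^ q.1 * u ^ q.2)
            * (∑' q : ℕ × ℕ, (Dcount (n - 1 - n1) q.1 q.2 : ℝ) * w ^ (q.1 + q.2)
                * (1 + w) ^ (n - 1 - n1 - q.2)) := by
  have hL : ∑' p : ℕ × ℕ, (p.2 : ℝ) * Dcount n p.1 p.2 * w ^ p.1 * u ^ p.2 =
      DagCount.dagSum n fun m k => k * (w ^ m * u ^ k) := by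
    rw [← DagCount.tsum_Dcount_mul]
    exact tsum_congr fun p => by ring
  have h₁ (j : ℕ) : ∑' q : ℕ × ℕ, (Dcount j q.1 q.2 : ℝ) * w ^ q.1 * u ^ q.2 =
      DagCount.dagSum j fun m k => w ^ m * u ^ k := by
    rw [← DagCount.tsum_Dcount_mul]
    exact tsum_congr fun q => by ring
  have h₂ (j : ℕ) :
      ∑' q : ℕ × ℕ, (Dcount j q.1 q.2 : ℝ) * w ^ (q.1 + q.2) * (1 + w) ^ (j - q.2) =
        DagCount.dagSum j fun m k => w ^ (m + k) * (1 + w) ^ (j - k) := by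
    rw [← DagCount.tsum_Dcount_mul]
    exact tsum_congr fun q => by ring
  simp only [hL, h₁, h₂, DagCount.dagSum_card_mul, DagCount.sum_mem_dagSources_eq_sum_range,
    sum_const, card_univ, Fintype.card_fin, nsmul_eq_mul]

/-- Coefficient-wise combinatorial form of the peeling-process
identity: for $n \ge 1$,
$\sum_{m,k} k D(n,m,k) w^m u^k = n \sum_{n_1+n_2=n-1} \binom{n-1}{n_1} (1+w)^{n_1 n_2} u
(\sum_{m_1,k_1} D(n_1,m_1,k_1) w^{m_1}u^{k_1})
(\sum_{m_2,k_2} D(n_2,m_2,k_2) w^{m_2+k_2}(1+w)^{n_2-k_2})$. -/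
theorem peeling_coefficient_identity (n : ℕ) (hn : 1 ≤ n) (w u : ℝ) :
    ∑' p : ℕ × ℕ, (p.2 : ℝ) * (Dcount n p.1 p.2) * w ^ p.1 * u ^ p.2
      = n * ∑ n1 ∈ Finset.range n,
          ((n - 1).choose n1 : ℝ) * (1 + w) ^ (n1 * (n - 1 - n1)) * u
            * (∑' q : ℕ × ℕ, (Dcount n1 q.1 q.2 : ℝ) * w ^ q.1 * u ^ q.2)
            * (∑' q : ℕ × ℕ, (Dcount (n - 1 - n1) q.1 q.2 : ℝ) * w ^ (q.1 + q.2)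
                * (1 + w) ^ (n - 1 - n1 - q.2)) :=
  peeling_coefficient_identity_general n w u
end

section
/- For all natural numbers n ≥ 1, k ≥ 1, and m ≥ 0, one has k · H(n,m,k) = n · D(n−1, m, k−1), where H(n,m,k) denotes the number of H-structures with n vertices, m edges and k sources, and D(n−1,m,k−1) the number of labelled DAGs on n−1 vertices with m edges and exactly k−1 sources. -/
open Classical in
/-- `Hcount n m k` = number of H-structures with `n` vertices, `m` edges and `k`
sources: labelled DAGs in which the source carrying the smallest label among all
sources is isolated (no incident edges, incoming or outgoing). -/
noncomputable def Hcount (n m k : ℕ) : ℕ :=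
  (Finset.univ.filter fun E : Finset (Fin n × Fin n) =>
    DAcyclic E ∧ E.card = m ∧ (dagSources E).card = k ∧
      ∀ v ∈ dagSources E, (∀ u ∈ dagSources E, v ≤ u) →
        ∀ u : Fin n, (u, v) ∉ E ∧ (v, u) ∉ E).card

/-!
Double count the pairs `(E, v)` with `E` an H-structure and `v` one of its `k` sources.
Swapping the labels of `v` and of the smallest source `s` preserves the set of sources and
hence `s`, so it is an involution which turns "`s` is isolated" into "`v` is isolated".
Thus for each of the `n` labels `v` the pairs with that label are equinumerous with the DAGs
with `k` sources in which `v` is isolated, and deleting `v` identifies those with the DAGs on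
`n - 1` vertices with `k - 1` sources.
-/

open Finset

def IsIsolated {n : ℕ} (E : Finset (Fin n × Fin n)) (v : Fin n) : Prop :=
  ∀ u, (u, v) ∉ E ∧ (v, u) ∉ E

def IsHStructure {n : ℕ} (E : Finset (Fin n × Fin n)) : Prop :=
  ∀ v ∈ dagSources E, (∀ u ∈ dagSources E, v ≤ u) → IsIsolated E v

lemma IsIsolated.mem_dagSources {n : ℕ} {E : Finset (Fin n × Fin n)} {v : Fin n}
    (h : IsIsolated E v) : v ∈ dagSources E := by
  simpa [dagSources] using fun u => (h u).1

open Classical in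
noncomputable def dagsWith (n m k : ℕ) : Finset (Finset (Fin n × Fin n)) :=
  {E | DAcyclic E ∧ #E = m ∧ #(dagSources E) = k}

lemma Dcount_eq_card (n m k : ℕ) : Dcount n m k = #(dagsWith n m k) := rfl

open Classical in
lemma Hcount_eq_card (n m k : ℕ) :
    Hcount n m k = #{E ∈ dagsWith n m k | IsHStructure E} := by
  rw [Hcount, dagsWith, filter_filter]
  congr 1 with E
  simp only [IsHStructure, IsIsolated, and_assoc]

section MapVertices

variable {n n' : ℕ} (f : Fin n ↪ Fin n') {E : Finset (Fin n × Fin n)}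

def mapVertices (f : Fin n ↪ Fin n') (E : Finset (Fin n × Fin n)) :
    Finset (Fin n' × Fin n') :=
  E.map (f.prodMap f)

lemma mem_mapVertices {p : Fin n' × Fin n'} :
    p ∈ mapVertices f E ↔ ∃ a b, (a, b) ∈ E ∧ f a = p.1 ∧ f b = p.2 := by
  simp [mapVertices, Prod.ext_iff]

@[simp]
lemma mk_apply_mem_mapVertices {a b : Fin n} : (f a, f b) ∈ mapVertices f E ↔ (a, b) ∈ E :=
  mem_map' (f.prodMap f) (a := (a, b))

lemma card_mapVertices : #(mapVertices f E) = #E := card_map _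

lemma exists_transGen_of_transGen_mapVertices {x y : Fin n'}
    (h : Relation.TransGen (fun a b => (a, b) ∈ mapVertices f E) x y) :
    ∃ a b, Relation.TransGen (fun a b => (a, b) ∈ E) a b ∧ f a = x ∧ f b = y := by
  induction h with
  | single hxy =>
    obtain ⟨a, b, hab, rfl, rfl⟩ := (mem_mapVertices f).1 hxy
    exact ⟨a, b, .single hab, rfl, rfl⟩
  | tail _ hyz ih =>
    obtain ⟨a, b, hab, rfl, rfl⟩ := ih
    obtain ⟨b', c, hbc, hb, rfl⟩ := (mem_mapVertices f).1 hyz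
    obtain rfl := f.injective hb
    exact ⟨a, c, hab.tail hbc, rfl, rfl⟩

lemma dAcyclic_mapVertices_iff : DAcyclic (mapVertices f E) ↔ DAcyclic E := by
  constructor
  · intro h a ha
    exact h (f a) (ha.lift f fun a b hab => (mk_apply_mem_mapVertices f).2 hab)
  · intro h x hx
    obtain ⟨a, b, hab, rfl, hb⟩ := exists_transGen_of_transGen_mapVertices f hx
    obtain rfl := f.injective hb
    exact h _ hab

lemma isIsolated_mapVertices_iff {w : Fin n} {x : Fin n'} (hw : f w = x) :
    IsIsolated (mapVertices f E) x ↔ IsIsolated E w := by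
  subst hw
  refine ⟨fun h u => by simpa using h (f u), fun h u => ⟨?_, ?_⟩⟩
  · rw [mem_mapVertices]
    rintro ⟨a, b, hab, -, hb⟩
    exact (h a).1 (f.injective hb ▸ hab)
  · rw [mem_mapVertices]
    rintro ⟨a, b, hab, ha, -⟩
    exact (h b).2 (f.injective ha ▸ hab)

lemma isIsolated_mapVertices_of_forall_ne {v : Fin n'} (hv : ∀ a, f a ≠ v) :
    IsIsolated (mapVertices f E) v := by
  refine fun u => ⟨?_, ?_⟩ <;> rw [mem_mapVertices]
  · rintro ⟨a, b, -, -, hb⟩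
    exact hv b hb
  · rintro ⟨a, b, -, ha, -⟩
    exact hv a ha

@[simp]
lemma apply_mem_dagSources_mapVertices {a : Fin n} :
    f a ∈ dagSources (mapVertices f E) ↔ a ∈ dagSources E := by
  simp only [dagSources, mem_filter, mem_univ, true_and, mem_mapVertices]
  refine ⟨fun h u hu => h (f u) ⟨u, a, hu, rfl, rfl⟩, ?_⟩
  rintro h u ⟨b, a', hba', -, ha'⟩
  exact h b (f.injective ha' ▸ hba')

end MapVertices

section SwapVertices

variable {n : ℕ}

def swapVertices (a b : Fin n) (E : Finset (Fin n × Fin n)) :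
    Finset (Fin n × Fin n) :=
  mapVertices (Equiv.swap a b).toEmbedding E

lemma swapVertices_swapVertices (a b : Fin n) (E : Finset (Fin n × Fin n)) :
    swapVertices a b (swapVertices a b E) = E := by
  rw [swapVertices, swapVertices, mapVertices, mapVertices, map_map]
  refine (congrArg (map · E) ?_).trans (map_refl (s := E))
  ext ⟨x, y⟩ <;> simp

lemma swap_apply_mem_iff {α : Type*} [DecidableEq α] {s : Finset α} {a b x : α}
    (ha : a ∈ s) (hb : b ∈ s) :
    Equiv.swap a b x ∈ s ↔ x ∈ s := by
  rw [Equiv.swap_apply_def]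
  split_ifs with hxa hxb <;> simp [*]

lemma dagSources_swapVertices {E : Finset (Fin n × Fin n)} {a b : Fin n}
    (ha : a ∈ dagSources E) (hb : b ∈ dagSources E) :
    dagSources (swapVertices a b E) = dagSources E := by
  ext x
  conv_lhs => rw [← Equiv.swap_apply_self a b x]
  exact (apply_mem_dagSources_mapVertices (Equiv.swap a b).toEmbedding).trans
    (swap_apply_mem_iff ha hb)

lemma swapVertices_mem_dagsWith_iff {E : Finset (Fin n × Fin n)} {a b : Fin n} {m k : ℕ}
    (ha : a ∈ dagSources E) (hb : b ∈ dagSources E) :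
    swapVertices a b E ∈ dagsWith n m k ↔ E ∈ dagsWith n m k := by
  simp only [dagsWith, mem_filter, mem_univ, true_and, swapVertices, dAcyclic_mapVertices_iff,
    card_mapVertices]
  rw [← swapVertices, dagSources_swapVertices ha hb]

end SwapVertices

section MinSource

variable {N : ℕ} {E : Finset (Fin (N + 1) × Fin (N + 1))} {v : Fin (N + 1)}

def minSource (E : Finset (Fin (N + 1) × Fin (N + 1))) : Fin (N + 1) :=
  if h : (dagSources E).Nonempty then (dagSources E).min' h else 0

lemma minSource_mem (h : v ∈ dagSources E) : minSource E ∈ dagSources E := by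
  rw [minSource, dif_pos ⟨v, h⟩]
  exact min'_mem _ _

lemma minSource_le (h : v ∈ dagSources E) : minSource E ≤ v := by
  rw [minSource, dif_pos ⟨v, h⟩]
  exact min'_le _ _ h

lemma isHStructure_iff (h : v ∈ dagSources E) : IsHStructure E ↔ IsIsolated E (minSource E) :=
  ⟨fun hE => hE _ (minSource_mem h) fun _ => minSource_le,
    fun hE _ hw hle => le_antisymm (hle _ (minSource_mem h)) (minSource_le hw) ▸ hE⟩

def swapWithMinSource (v : Fin (N + 1)) (E : Finset (Fin (N + 1) × Fin (N + 1))) :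
    Finset (Fin (N + 1) × Fin (N + 1)) :=
  swapVertices v (minSource E) E

lemma dagSources_swapWithMinSource (h : v ∈ dagSources E) :
    dagSources (swapWithMinSource v E) = dagSources E :=
  dagSources_swapVertices h (minSource_mem h)

lemma minSource_swapWithMinSource (h : v ∈ dagSources E) :
    minSource (swapWithMinSource v E) = minSource E := by
  rw [minSource, minSource, dagSources_swapWithMinSource h]

lemma swapWithMinSource_swapWithMinSource (h : v ∈ dagSources E) :
    swapWithMinSource v (swapWithMinSource v E) = E := by
  rw [swapWithMinSource, minSource_swapWithMinSource h, swapWithMinSource,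
    swapVertices_swapVertices]

lemma isIsolated_swapWithMinSource_iff (h : v ∈ dagSources E) :
    IsIsolated (swapWithMinSource v E) v ↔ IsHStructure E := by
  rw [isHStructure_iff h]
  exact isIsolated_mapVertices_iff _ (Equiv.swap_apply_right v (minSource E))

lemma isHStructure_swapWithMinSource_iff (h : v ∈ dagSources E) :
    IsHStructure (swapWithMinSource v E) ↔ IsIsolated E v := by
  rw [isHStructure_iff ((dagSources_swapWithMinSource h).symm ▸ h),
    minSource_swapWithMinSource h]
  exact isIsolated_mapVertices_iff _ (Equiv.swap_apply_left v (minSource E))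

open Classical in
lemma card_hStructuresWithSource_eq_card_isolatedAt (m k : ℕ) (v : Fin (N + 1)) :
    #{E ∈ dagsWith (N + 1) m k | IsHStructure E ∧ v ∈ dagSources E} =
      #{E ∈ dagsWith (N + 1) m k | IsIsolated E v} := by
  refine card_nbij' (swapWithMinSource v) (swapWithMinSource v) ?_ ?_ ?_ ?_ <;>
    simp only [Set.MapsTo, Set.LeftInvOn, Set.RightInvOn, mem_coe, mem_filter]
  · rintro E ⟨hE, hH, hv⟩
    exact ⟨(swapVertices_mem_dagsWith_iff hv (minSource_mem hv)).2 hE,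
      (isIsolated_swapWithMinSource_iff hv).2 hH⟩
  · rintro E ⟨hE, hiso⟩
    have hv := hiso.mem_dagSources
    exact ⟨(swapVertices_mem_dagsWith_iff hv (minSource_mem hv)).2 hE,
      (isHStructure_swapWithMinSource_iff hv).2 hiso, (dagSources_swapWithMinSource hv).symm ▸ hv⟩
  · rintro E ⟨-, -, hv⟩
    exact swapWithMinSource_swapWithMinSource hv
  · rintro E ⟨-, hiso⟩
    exact swapWithMinSource_swapWithMinSource hiso.mem_dagSources

end MinSource

section DeleteVertex

variable {N : ℕ} {v : Fin (N + 1)}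

def deleteVertex (v : Fin (N + 1)) (E : Finset (Fin (N + 1) × Fin (N + 1))) :
    Finset (Fin N × Fin N) :=
  {q | (v.succAbove q.1, v.succAbove q.2) ∈ E}

@[simp]
lemma mem_deleteVertex {E : Finset (Fin (N + 1) × Fin (N + 1))} {q : Fin N × Fin N} :
    q ∈ deleteVertex v E ↔ (v.succAbove q.1, v.succAbove q.2) ∈ E := by
  simp [deleteVertex]

lemma deleteVertex_mapVertices (D : Finset (Fin N × Fin N)) :
    deleteVertex v (mapVertices (Fin.succAboveEmb v) D) = D := by
  ext ⟨a, b⟩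
  exact mem_deleteVertex.trans (mk_apply_mem_mapVertices (Fin.succAboveEmb v))

lemma mapVertices_deleteVertex {E : Finset (Fin (N + 1) × Fin (N + 1))} (h : IsIsolated E v) :
    mapVertices (Fin.succAboveEmb v) (deleteVertex v E) = E := by
  ext ⟨x, y⟩
  simp only [mem_mapVertices]
  refine ⟨fun ⟨a, b, hab, ha, hb⟩ => ha ▸ hb ▸ mem_deleteVertex.1 hab, fun hxy => ?_⟩
  obtain ⟨a, rfl⟩ := Fin.exists_succAbove_eq fun hx : x = v => (h y).2 (hx ▸ hxy)
  obtain ⟨b, rfl⟩ := Fin.exists_succAbove_eq fun hy : y = v => (h _).1 (hy ▸ hxy)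
  exact ⟨a, b, mem_deleteVertex.2 hxy, rfl, rfl⟩

lemma card_dagSources_mapVertices_succAboveEmb (D : Finset (Fin N × Fin N)) :
    #(dagSources (mapVertices (Fin.succAboveEmb v) D)) = #(dagSources D) + 1 := by
  have hv : v ∉ (dagSources D).map (Fin.succAboveEmb v) := by simp [Fin.succAbove_ne]
  have hsrc : dagSources (mapVertices (Fin.succAboveEmb v) D) =
      insert v ((dagSources D).map (Fin.succAboveEmb v)) := by
    ext x
    rcases Fin.eq_self_or_eq_succAbove v x with rfl | ⟨a, rfl⟩
    · simpa using (isIsolated_mapVertices_of_forall_ne _ (Fin.succAbove_ne x)).mem_dagSources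
    · rw [← Fin.succAboveEmb_apply, apply_mem_dagSources_mapVertices]
      simp [Fin.succAbove_ne]
  rw [hsrc, card_insert_of_notMem hv, card_map]

lemma mapVertices_succAboveEmb_mem_dagsWith_iff {D : Finset (Fin N × Fin N)} {m k : ℕ} :
    mapVertices (Fin.succAboveEmb v) D ∈ dagsWith (N + 1) m (k + 1) ↔ D ∈ dagsWith N m k := by
  simp only [dagsWith, mem_filter, mem_univ, true_and, dAcyclic_mapVertices_iff,
    card_mapVertices, card_dagSources_mapVertices_succAboveEmb, Nat.add_right_cancel_iff]

open Classical in
lemma card_isolatedAt_eq_card_dagsWith (m k : ℕ) (v : Fin (N + 1)) :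
    #{E ∈ dagsWith (N + 1) m (k + 1) | IsIsolated E v} = #(dagsWith N m k) := by
  refine card_nbij' (deleteVertex v) (mapVertices (Fin.succAboveEmb v)) ?_ ?_ ?_ ?_ <;>
    simp only [Set.MapsTo, Set.LeftInvOn, Set.RightInvOn, mem_coe, mem_filter]
  · rintro E ⟨hE, hiso⟩
    rwa [← mapVertices_deleteVertex hiso, mapVertices_succAboveEmb_mem_dagsWith_iff] at hE
  · exact fun D hD => ⟨mapVertices_succAboveEmb_mem_dagsWith_iff.2 hD,
      isIsolated_mapVertices_of_forall_ne _ (Fin.succAbove_ne v)⟩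
  · rintro E ⟨-, hiso⟩
    exact mapVertices_deleteVertex hiso
  · exact fun D _ => deleteVertex_mapVertices D

end DeleteVertex

lemma card_dagSources_of_mem_dagsWith {n m k : ℕ} {E : Finset (Fin n × Fin n)}
    (h : E ∈ dagsWith n m k) : #(dagSources E) = k := by
  simp only [dagsWith, mem_filter] at h
  exact h.2.2.2

/-- For $n ≥ 1$, $k ≥ 1$ and $m ≥ 0$:
$k \cdot H(n,m,k) = n \cdot D(n-1,m,k-1)$. -/
theorem H_structure_count (n m k : ℕ) (hn : 1 ≤ n) (hk : 1 ≤ k) :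
    k * Hcount n m k = n * Dcount (n - 1) m (k - 1) := by
  classical
  obtain ⟨N, rfl⟩ := Nat.exists_eq_add_of_le' hn
  obtain ⟨k, rfl⟩ := Nat.exists_eq_add_of_le' hk
  rw [Nat.add_sub_cancel, Nat.add_sub_cancel, Hcount_eq_card, Dcount_eq_card]
  set H := {E ∈ dagsWith (N + 1) m (k + 1) | IsHStructure E}
  calc (k + 1) * #H = ∑ E ∈ H, #(dagSources E) := by
        rw [sum_const_nat fun E hE => card_dagSources_of_mem_dagsWith (mem_filter.1 hE).1,
          mul_comm]
    _ = ∑ v, #{E ∈ H | v ∈ dagSources E} := by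
        simpa [bipartiteAbove, bipartiteBelow] using
          sum_card_bipartiteAbove_eq_sum_card_bipartiteBelow (s := H) (t := univ)
            (fun E v => v ∈ dagSources E)
    _ = ∑ _v : Fin (N + 1), #(dagsWith N m k) := by
        refine sum_congr rfl fun v _ => ?_
        rw [filter_filter, card_hStructuresWithSource_eq_card_isolatedAt,
          card_isolatedAt_eq_card_dagsWith]
    _ = (N + 1) * #(dagsWith N m k) := by simp
end

section
/- Let w > 0 and define H(z,u) := (Set((u−1)z, w) − Set(−z, w)) / Set(−z/(1+w), w) for real z with Set(−z/(1+w), w) ≠ 0. Then for all real u and all real z such that Set(−z,w) ≠ 0 and Set(−z/(1+w), w) ≠ 0, one has 1 − H(z, w/(1+w)) = Set(−z,w)/Set(−z/(1+w),w) ≠ 0 and Set((u−1)z, w)/Set(−z, w) = 1 + H(z,u) / (1 − H(z, w/(1+w))). (This is the sequential decomposition DAG(z,w,u) = 1 + H(z,w,u)/(1 − H(z,w,w/(1+w))).) -/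
/-- `H(z,u) = (Set((u-1)z,w) - Set(-z,w)) / Set(-z/(1+w),w)`, the graphic generating
function of H-structures. -/
noncomputable def HGF (w z u : ℝ) : ℝ :=
  (SetGF ((u - 1) * z) w - SetGF (-z) w) / SetGF (-(z / (1 + w))) w

/-! At `u = w/(1+w)` the numerator of `H` contains the denominator `Set(-z/(1+w))` itself,
which is what makes `1 - H(z, w/(1+w))` collapse to a quotient of two `Set` values; the
decomposition is then an identity in the field `ℝ`. -/

lemma div_one_add_sub_one_mul {w : ℝ} (hw : 1 + w ≠ 0) (z : ℝ) :
    (w / (1 + w) - 1) * z = -(z / (1 + w)) := by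
  field_simp
  ring

lemma one_sub_HGF_div_one_add {w : ℝ} (hw : 1 + w ≠ 0) {z : ℝ}
    (h : SetGF (-(z / (1 + w))) w ≠ 0) :
    1 - HGF w z (w / (1 + w)) = SetGF (-z) w / SetGF (-(z / (1 + w))) w := by
  rw [HGF, div_one_add_sub_one_mul hw, sub_div, div_self h, sub_sub_cancel]

/-- Sequential decomposition:
`1 - H(z, w/(1+w)) = Set(-z,w)/Set(-z/(1+w),w) ≠ 0` and
`DAG(z,w,u) = 1 + H(z,u)/(1 - H(z,w/(1+w)))`. -/
theorem sequential_decomposition (w : ℝ) (hw : 0 < w) (z u : ℝ)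
    (h1 : SetGF (-z) w ≠ 0) (h2 : SetGF (-(z / (1 + w))) w ≠ 0) :
    (1 - HGF w z (w / (1 + w)) = SetGF (-z) w / SetGF (-(z / (1 + w))) w
      ∧ 1 - HGF w z (w / (1 + w)) ≠ 0)
    ∧ SetGF ((u - 1) * z) w / SetGF (-z) w
        = 1 + HGF w z u / (1 - HGF w z (w / (1 + w))) := by
  have hkey := one_sub_HGF_div_one_add (by positivity : (1 : ℝ) + w ≠ 0) h2
  refine ⟨⟨hkey, hkey ▸ div_ne_zero h1 h2⟩, ?_⟩
  rw [hkey, HGF, div_div_div_cancel_right₀ h2, sub_div, div_self h1, add_sub_cancel]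
end

section
/- Let w > 0 and let f(z) := Set(−z, w) (an entire function of z). Suppose ρ > 0 is a simple zero of f and there exists R > ρ such that f has no zero other than ρ in the closed complex disk of radius R. Then the coefficients d_n := [z^n] (1/f(z)) of the power-series expansion of 1/f around 0 satisfy d_n ~ ρ^{−n} / (ρ · Set(−ρ/(1+w), w)) as n → ∞; equivalently, the number a_n of labelled DAGs on n vertices weighted so that d_n = A_n(w)/((1+w)^{n(n−1)/2} n!) grows with this asymptotic. -/
/-- `Set(z,w)` as an entire function of the complex variable `z`. -/
noncomputable def SetC (z : ℂ) (w : ℝ) : ℂ :=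
  ∑' n : ℕ, z ^ n / ((1 + w : ℂ) ^ n.choose 2 * n.factorial)

/-!
Termwise differentiation gives `∂_z Set(z, w) = Set(z/(1+w), w)`, so `f(z) = Set(-z, w)` is
entire with `f'(ρ) = -Set(-ρ/(1+w), w)`. Removing the simple pole `1/(f'(ρ)(z - ρ))` from `1/f`
leaves a function holomorphic on the disc of radius `R > ρ`, whose Taylor coefficients are
therefore `o(ρ^{-n})`, while the pole contributes `-ρ^{-n-1}/f'(ρ)` to the `n`-th coefficient.
Uniqueness of real power series identifies `d_n` with the real part of the complex coefficient.
-/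

open Filter Metric Topology
open scoped Nat

section SetSeries

variable {w : ℝ}

lemma norm_setC_term_le (hw : 0 ≤ w) (z : ℂ) (n : ℕ) :
    ‖z ^ n / ((1 + w : ℂ) ^ n.choose 2 * n !)‖ ≤ ‖z‖ ^ n / n ! := by
  have hnorm : ‖(1 + w : ℂ)‖ = 1 + w := by
    rw [← Complex.ofReal_one, ← Complex.ofReal_add, Complex.norm_real,
      Real.norm_of_nonneg (by linarith)]
  rw [norm_div, norm_pow, norm_mul, norm_pow, hnorm, Complex.norm_natCast]
  gcongr
  exact le_mul_of_one_le_left (by positivity) (one_le_pow₀ (by linarith))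

lemma setC_ofReal (x : ℝ) : SetC x w = SetGF x w := by
  rw [SetC, SetGF, Complex.ofReal_tsum]
  push_cast
  rfl

lemma hasDerivAt_setC (hw : 0 ≤ w) (z : ℂ) :
    HasDerivAt (fun y => SetC y w) (SetC (z / (1 + w)) w) z := by
  have h1w : (1 + w : ℂ) ≠ 0 := by exact_mod_cast (by linarith : (1 + w) ≠ 0)
  set term : ℕ → ℂ → ℂ := fun n y => y ^ n / ((1 + w : ℂ) ^ n.choose 2 * n !)
  have hU : z ∈ ball (0 : ℂ) (‖z‖ + 1) := by simp
  have hbound : ∀ n, ∀ y ∈ ball (0 : ℂ) (‖z‖ + 1), ‖term n y‖ ≤ (‖z‖ + 1) ^ n / n ! :=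
    fun n y hy => (norm_setC_term_le hw y n).trans (by
      gcongr; exact (mem_ball_zero_iff.1 hy).le)
  have hdiff : ∀ n, DifferentiableOn ℂ (term n) (ball 0 (‖z‖ + 1)) := fun n => by fun_prop
  have hsum := Real.summable_pow_div_factorial (‖z‖ + 1)
  have hderiv := Complex.hasSum_deriv_of_summable_norm hsum hdiff isOpen_ball hbound hU
  -- `C(n+1,2) = C(n,2) + n`: the derivative of the `(n+1)`-st term is the `n`-th term at `z/(1+w)`
  have hshift : HasSum (fun n => deriv (term n) z) (SetC (z / (1 + w)) w) := by
    rw [← hasSum_nat_add_iff' 1]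
    simp only [term, deriv_div_const, deriv_pow_field, Finset.range_one, Finset.sum_singleton,
      Nat.cast_zero, zero_mul, zero_div, sub_zero, Nat.add_sub_cancel]
    convert (Summable.of_norm_bounded (Real.summable_pow_div_factorial _)
      (norm_setC_term_le hw (z / (1 + w)))).hasSum using 1
    · funext n
      rw [Nat.choose_succ_succ, Nat.choose_one_right, Nat.factorial_succ, pow_add, div_pow]
      push_cast
      field_simp
    · rfl
  rw [hshift.unique hderiv]
  exact ((Complex.differentiableOn_tsum_of_summable_norm hsum hdiff isOpen_ball
    hbound).differentiableAt (isOpen_ball.mem_nhds hU)).hasDerivAt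

lemma hasDerivAt_setGF (hw : 0 ≤ w) (x : ℝ) :
    HasDerivAt (fun t => SetGF t w) (SetGF (x / (1 + w)) w) x := by
  have h := (hasDerivAt_setC hw x).real_of_complex
  simp only [setC_ofReal, Complex.ofReal_re] at h
  convert h using 1
  rw [← Complex.ofReal_one, ← Complex.ofReal_add, ← Complex.ofReal_div, setC_ofReal,
    Complex.ofReal_re]

end SetSeries

lemma hasSum_pow_div_pow_succ {𝕜 : Type*} [NormedField 𝕜] [CompleteSpace 𝕜] {a z : 𝕜}
    (hz : ‖z‖ < ‖a‖) : HasSum (fun n => z ^ n / a ^ (n + 1)) (a - z)⁻¹ := by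
  have ha : a ≠ 0 := norm_pos_iff.1 ((norm_nonneg z).trans_lt hz)
  have hza : ‖z / a‖ < 1 := by rwa [norm_div, div_lt_one (norm_pos_iff.2 ha)]
  convert (hasSum_geometric_of_norm_lt_one hza).div_const a using 1
  · funext n
    rw [div_pow, pow_succ, div_div]
  · rw [div_eq_inv_mul, ← mul_inv, mul_sub, mul_one, mul_div_cancel₀ _ ha]

theorem eq_of_hasSum_mul_pow {𝕜 : Type*} [NontriviallyNormedField 𝕜] {a b : ℕ → 𝕜}
    {F : 𝕜 → 𝕜} {r : ℝ} (hr : 0 < r)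
    (ha : ∀ x, ‖x‖ < r → HasSum (fun n => a n * x ^ n) (F x))
    (hb : ∀ x, ‖x‖ < r → HasSum (fun n => b n * x ^ n) (F x)) : a = b := by
  obtain ⟨x, hx0, hxr⟩ := NormedField.exists_norm_lt 𝕜 hr
  have hseries : ∀ c : ℕ → 𝕜, (∀ y, ‖y‖ < r → HasSum (fun n => c n * y ^ n) (F y)) →
      HasFPowerSeriesAt F (FormalMultilinearSeries.ofScalars 𝕜 c) 0 := by
    intro c hc
    refine ⟨‖x‖₊, ?_, by simpa using hx0, fun {y} hy => ?_⟩
    · refine FormalMultilinearSeries.le_radius_of_tendsto _ (l := 0) ?_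
      simpa [FormalMultilinearSeries.ofScalars_norm, norm_mul, norm_pow]
        using (hc x hxr).summable.tendsto_atTop_zero.norm
    · rw [Metric.mem_eball, edist_zero_right] at hy
      have hyx : ‖y‖ < ‖x‖ := by simpa [← NNReal.coe_lt_coe] using hy
      simpa [FormalMultilinearSeries.ofScalars_apply_eq, mul_comm] using hc y (hyx.trans hxr)
  exact FormalMultilinearSeries.ofScalars_series_injective 𝕜 𝕜
    ((hseries a ha).eq_formalMultilinearSeries (hseries b hb))

section SimplePole

variable {f : ℂ → ℂ} {a : ℂ}

lemma dslope_inv_dslope_of_ne (hfa : f a = 0) {z : ℂ} (hz : z ≠ a) :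
    dslope (fun y => (dslope f a y)⁻¹) a z = (f z)⁻¹ - (deriv f a * (z - a))⁻¹ := by
  have hza : z - a ≠ 0 := sub_ne_zero.2 hz
  rw [dslope_of_ne _ hz, slope_def_field, dslope_same, dslope_of_ne _ hz, slope_def_field, hfa,
    sub_zero]
  field_simp

lemma differentiableOn_dslope_inv_dslope {s : Set ℂ} (hs : IsOpen s) (ha : a ∈ s)
    (hf : DifferentiableOn ℂ f s) (hfa : f a = 0) (hf' : deriv f a ≠ 0)
    (hzero : ∀ z ∈ s, f z = 0 → z = a) :
    DifferentiableOn ℂ (dslope (fun y => (dslope f a y)⁻¹) a) s := by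
  have hne : ∀ z ∈ s, dslope f a z ≠ 0 := by
    intro z hz
    rcases eq_or_ne z a with rfl | hza
    · rwa [dslope_same]
    · rw [dslope_of_ne _ hza, slope_def_field, hfa, sub_zero]
      exact div_ne_zero (mt (hzero z hz) hza) (sub_ne_zero.2 hza)
  rw [Complex.differentiableOn_dslope (hs.mem_nhds ha)]
  exact ((Complex.differentiableOn_dslope (hs.mem_nhds ha)).2 hf).inv hne

theorem exists_hasSum_inv_of_simple_zero {R : ℝ} (hf : DifferentiableOn ℂ f (ball 0 R))
    (ha : a ∈ ball 0 R) (ha0 : a ≠ 0) (hfa : f a = 0) (hf' : deriv f a ≠ 0)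
    (hzero : ∀ z ∈ ball 0 R, f z = 0 → z = a) :
    ∃ e : ℕ → ℂ, (∀ z, ‖z‖ < ‖a‖ → HasSum (fun n => e n * z ^ n) (f z)⁻¹) ∧
      Tendsto (fun n => e n * a ^ (n + 1)) atTop (𝓝 (-(deriv f a)⁻¹)) := by
  -- the regular part `1/f - 1/(f'(a)(z - a))` of `1/f` at `a`
  set G := dslope (fun y => (dslope f a y)⁻¹) a
  have hG := differentiableOn_dslope_inv_dslope isOpen_ball ha hf hfa hf' hzero
  set q : ℕ → ℂ := fun n => (n ! : ℂ)⁻¹ * iteratedDeriv n G 0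
  have hq : ∀ z ∈ ball (0 : ℂ) R, HasSum (fun n => q n * z ^ n) (G z) := fun z hz => by
    simpa [q, smul_eq_mul, mul_comm, mul_left_comm]
      using Complex.hasSum_taylorSeries_on_ball hG hz
  refine ⟨fun n => q n - (deriv f a)⁻¹ * (a ^ (n + 1))⁻¹, fun z hz => ?_, ?_⟩
  · have hza : z ≠ a := by rintro rfl; exact lt_irrefl _ hz
    have hzR : z ∈ ball (0 : ℂ) R := mem_ball_zero_iff.2 (hz.trans (mem_ball_zero_iff.1 ha))
    have hsum := (hq z hzR).sub ((hasSum_pow_div_pow_succ hz).mul_left (deriv f a)⁻¹)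
    rw [show G z = _ from dslope_inv_dslope_of_ne hfa hza, ← neg_sub a z, mul_neg, inv_neg,
      sub_neg_eq_add, mul_inv, add_sub_cancel_right] at hsum
    have hterms : ∀ n, (q n - (deriv f a)⁻¹ * (a ^ (n + 1))⁻¹) * z ^ n =
        q n * z ^ n - (deriv f a)⁻¹ * (z ^ n / a ^ (n + 1)) := fun n => by ring
    simpa only [hterms] using hsum
  · have hlim : Tendsto (fun n => q n * a ^ n) atTop (𝓝 0) :=
      (hq a ha).summable.tendsto_atTop_zero
    convert (hlim.mul_const a).sub_const (deriv f a)⁻¹ using 1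
    · funext n
      field_simp
      ring
    · simp

end SimplePole

/-- Let `w > 0` and `f(z) = Set(-z,w)`. If `ρ > 0` is a simple zero
of `f`, and `f` has no complex zero other than `ρ` in a closed disk of radius `R > ρ`,
then the coefficients `d_n` of the power-series expansion of `1/f` around `0` satisfy
`d_n ~ ρ^{-n} / (ρ · Set(-ρ/(1+w), w))` as `n → ∞`. -/
theorem dag_coefficient_asymptotics (w : ℝ) (hw : 0 < w) (ρ : ℝ) (hρ : 0 < ρ)
    (hzero : SetGF (-ρ) w = 0)
    (hsimple : deriv (fun x : ℝ => SetGF (-x) w) ρ ≠ 0)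
    (R : ℝ) (hR : ρ < R)
    (honly : ∀ ζ : ℂ, ‖ζ‖ ≤ R → SetC (-ζ) w = 0 → ζ = (ρ : ℂ))
    (d : ℕ → ℝ)
    (hd : ∀ x : ℝ, |x| < ρ → HasSum (fun n : ℕ => d n * x ^ n) (1 / SetGF (-x) w)) :
    Filter.Tendsto (fun n : ℕ => d n * ρ ^ n * (ρ * SetGF (-(ρ / (1 + w))) w))
      Filter.atTop (nhds 1) := by
  set B := SetGF (-(ρ / (1 + w))) w
  set f : ℂ → ℂ := fun z => SetC (-z) w
  have hf_real (x : ℝ) : f x = SetGF (-x) w := by simp [f, ← setC_ofReal]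
  have hf_deriv (z : ℂ) : HasDerivAt f (-SetC (-z / (1 + w)) w) z := by
    simpa [Function.comp_def] using (hasDerivAt_setC hw.le (-z)).comp z (hasDerivAt_neg z)
  have hB : HasDerivAt (fun x : ℝ => SetGF (-x) w) (-B) ρ := by
    simpa [B, neg_div, Function.comp_def]
      using (hasDerivAt_setGF hw.le (-ρ)).comp ρ (hasDerivAt_neg ρ)
  have hB_ne : B ≠ 0 := by
    rw [hB.deriv] at hsimple
    exact neg_ne_zero.1 hsimple
  have hf'ρ : deriv f ρ = -B := by
    rw [(hf_deriv ρ).deriv, neg_div, ← Complex.ofReal_one, ← Complex.ofReal_add,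
      ← Complex.ofReal_div, ← Complex.ofReal_neg, setC_ofReal]
  obtain ⟨e, he_sum, he_lim⟩ := exists_hasSum_inv_of_simple_zero (R := R)
    (fun z _ => (hf_deriv z).differentiableAt.differentiableWithinAt)
    (by simpa [abs_of_pos hρ] using hR) (by exact_mod_cast hρ.ne')
    (by rw [hf_real, hzero, Complex.ofReal_zero])
    (by rwa [hf'ρ, neg_ne_zero, Complex.ofReal_ne_zero])
    (fun z hz h => honly z (mem_ball_zero_iff.1 hz).le h)
  have hde : d = fun n => (e n).re := by
    refine eq_of_hasSum_mul_pow hρ hd fun x hx => ?_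
    have := Complex.hasSum_re (he_sum x (by simpa [abs_of_pos hρ] using hx))
    simpa [hf_real, ← Complex.ofReal_pow, Complex.re_mul_ofReal] using this
  have hlim := ((Complex.continuous_re.tendsto _).comp he_lim).mul_const B
  rw [hf'ρ, inv_neg, neg_neg, ← Complex.ofReal_inv, Complex.ofReal_re,
    inv_mul_cancel₀ hB_ne] at hlim
  refine hlim.congr fun n => ?_
  simp only [hde, Function.comp_apply, ← Complex.ofReal_pow, Complex.re_mul_ofReal]
  ring
end
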